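/- arXiv:1612.08470 — 6 statements merged into one kernel-verified Lean document; each statement's English description precedes it below -/
import Mathlib

section
/- Let f : ℝ → ℝ → ℝ be such that the uncurried map (t, x) ↦ f t x is infinitely differentiable. For n ∈ ℕ, t₀ ∈ ℝ and Y : ℕ → ℝ define F(n)(t₀, Y) = (1/n!) · dⁿ/dλⁿ [ f(t₀ + λ, ∑_{i=0}^{n} Y(i)·λ^i) ] evaluated at λ = 0. Then for every n ≥ 1, every t₀ and every Y, n · F(n)(t₀, Y) = ∂F(n−1)/∂t₀ (t₀, Y) + ∑_{i=0}^{n−1} (i+1)·Y(i+1) · ∂F(n−1)/∂Y(i) (t₀, Y), where ∂F(n−1)/∂t₀ denotes the derivative of s ↦ F(n−1)(s, Y) at s = t₀ and ∂F(n−1)/∂Y(i) denotes the derivative of s ↦ F(n−1)(t₀, Function.update Y i s) at s = Y(i). Moreover F(0)(t₀, Y) = f(t₀, Y(0)). -/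
open scoped ContDiff
open Finset

/-! ### Auxiliary lemmas -/

lemma paramSmooth {E : Type*} [NormedAddCommGroup E] [NormedSpace ℝ E] (k : ℕ) :
    ∀ g : E × ℝ → ℝ, ContDiff ℝ ∞ g →
      ContDiff ℝ ∞ (fun p : E => iteratedDeriv k (fun x => g (p, x)) 0) := by
  induction k with
  | zero =>
    intro g hg
    simpa [iteratedDeriv_zero, Function.comp_def] using hg.comp (contDiff_id.prodMk contDiff_const)
  | succ k ih =>
    intro g hg
    have hkey : (fun p : E => iteratedDeriv (k+1) (fun x => g (p, x)) 0)
        = fun p : E => iteratedDeriv k (fun x => (fun q : E × ℝ => fderiv ℝ g q (0, 1)) (p, x)) 0 := by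
      funext p
      rw [iteratedDeriv_succ']
      congr 1
      funext x
      exact (((hg.differentiable (by simp) (p, x)).hasFDerivAt).comp_hasDerivAt x
        (((hasDerivAt_const x p)).prodMk (hasDerivAt_id x))).deriv
    rw [hkey]
    exact ih _ ((hg.fderiv_right (by exact_mod_cast le_top)).clm_apply contDiff_const)

lemma flat_vanish (k : ℕ) : ∀ e : ℕ, k ≤ e → ∀ V : ℝ → ℝ, ContDiff ℝ ∞ V →
    iteratedDeriv k (fun x : ℝ => x ^ (e + 1) * V x) 0 = 0 := by
  induction k with
  | zero => intro e he V hV; simp [iteratedDeriv_zero]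
  | succ k ih =>
    intro e he V hV
    obtain ⟨e', rfl⟩ : ∃ e', e = e' + 1 := ⟨e - 1, by omega⟩
    rw [iteratedDeriv_succ']
    have hV' : ContDiff ℝ ∞ (deriv V) := (contDiff_infty_iff_deriv.mp hV).2
    have hd : deriv (fun x : ℝ => x ^ (e' + 1 + 1) * V x)
        = fun x : ℝ => x ^ (e' + 1) * (((e' : ℝ) + 2) * V x + x * deriv V x) := by
      funext x
      rw [deriv_fun_mul (differentiableAt_pow _)
        (hV.differentiable (by simp)).differentiableAt, deriv_pow_field]
      push_cast
      ring
    rw [hd]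
    exact ih e' (by omega) _ (((contDiff_const.mul hV).add (contDiff_id.mul hV')))

lemma iteratedDeriv_add' (k : ℕ) {f g : ℝ → ℝ} (hf : ContDiff ℝ ∞ f) (hg : ContDiff ℝ ∞ g)
    (x : ℝ) :
    iteratedDeriv k (fun y => f y + g y) x = iteratedDeriv k f x + iteratedDeriv k g x := by
  have := iteratedDerivWithin_add (f := f) (g := g) (n := k) (Set.mem_univ x) uniqueDiffOn_univ
    (hf.of_le (by exact_mod_cast le_top)).contDiffWithinAt (hg.of_le (by exact_mod_cast le_top)).contDiffWithinAt
  simpa [iteratedDerivWithin_univ, Pi.add_def, Pi.sub_def] using this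

lemma iteratedDeriv_sub' (k : ℕ) {f g : ℝ → ℝ} (hf : ContDiff ℝ ∞ f) (hg : ContDiff ℝ ∞ g)
    (x : ℝ) :
    iteratedDeriv k (fun y => f y - g y) x = iteratedDeriv k f x - iteratedDeriv k g x := by
  have := iteratedDerivWithin_sub (f := f) (g := g) (n := k) (Set.mem_univ x) uniqueDiffOn_univ
    (hf.of_le (by exact_mod_cast le_top)).contDiffWithinAt (hg.of_le (by exact_mod_cast le_top)).contDiffWithinAt
  simpa [iteratedDerivWithin_univ, Pi.add_def, Pi.sub_def] using this

lemma vanish (k : ℕ) : ∀ p : ℕ, k ≤ p → ∀ W : ℝ × ℝ → ℝ, ContDiff ℝ ∞ W →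
    (∀ s, W (s, 0) = 0) → iteratedDeriv k (fun x : ℝ => W (x, x ^ (p + 1))) 0 = 0 := by
  induction k with
  | zero =>
    intro p hp W hW hW0
    simpa [iteratedDeriv_zero, zero_pow] using hW0 0
  | succ k ih =>
    intro p hp W hW hW0
    obtain ⟨p', rfl⟩ : ∃ p', p = p' + 1 := ⟨p - 1, by omega⟩
    rw [iteratedDeriv_succ']
    set W₁ : ℝ × ℝ → ℝ := fun q => fderiv ℝ W q (1, 0) with hW₁def
    set W₂ : ℝ × ℝ → ℝ := fun q => fderiv ℝ W q (0, 1) with hW₂def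
    have hsm : ∀ v : ℝ × ℝ, ContDiff ℝ ∞ (fun q : ℝ × ℝ => fderiv ℝ W q v) := by
      intro v
      exact (hW.fderiv_right (by exact_mod_cast le_top)).clm_apply contDiff_const
    have hcurve : ∀ x : ℝ, HasDerivAt (fun x : ℝ => (x, x ^ (p' + 1 + 1)))
        (1, (↑(p' + 1 + 1) : ℝ) * x ^ (p' + 1)) x :=
      fun x => (hasDerivAt_id x).prodMk (hasDerivAt_pow (p' + 1 + 1) x)
    have hderiv : deriv (fun x : ℝ => W (x, x ^ (p' + 1 + 1)))
        = fun x : ℝ => W₁ (x, x ^ (p' + 1 + 1))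
            + x ^ (p' + 1) * ((↑(p' + 1 + 1) : ℝ) * W₂ (x, x ^ (p' + 1 + 1))) := by
      funext x
      have h1 : HasDerivAt (fun x : ℝ => W (x, x ^ (p' + 1 + 1)))
          (fderiv ℝ W (x, x ^ (p' + 1 + 1)) (1, (↑(p' + 1 + 1) : ℝ) * x ^ (p' + 1))) x :=
        ((hW.differentiable (by simp) _).hasFDerivAt).comp_hasDerivAt x (hcurve x)
      rw [h1.deriv]
      have hvec : ((1 : ℝ), (↑(p' + 1 + 1) : ℝ) * x ^ (p' + 1))
          = (1, 0) + ((↑(p' + 1 + 1) : ℝ) * x ^ (p' + 1)) • ((0 : ℝ), (1 : ℝ)) := by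
        simp [Prod.ext_iff]
      rw [hvec, map_add, map_smul]
      simp only [smul_eq_mul, hW₁def, hW₂def]
      ring
    rw [hderiv]
    have hA : ContDiff ℝ ∞ (fun x : ℝ => W₁ (x, x ^ (p' + 1 + 1))) :=
      (hsm _).comp (contDiff_id.prodMk (contDiff_id.pow _))
    have hB : ContDiff ℝ ∞ (fun x : ℝ =>
        x ^ (p' + 1) * ((↑(p' + 1 + 1) : ℝ) * W₂ (x, x ^ (p' + 1 + 1)))) :=
      (contDiff_id.pow _).mul
        (contDiff_const.mul ((hsm _).comp (contDiff_id.prodMk (contDiff_id.pow _))))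
    rw [iteratedDeriv_add' k hA hB 0]
    have hzero1 : ∀ s, W₁ (s, 0) = 0 := by
      intro s
      have hconst : HasDerivAt (fun t : ℝ => W (t, 0)) (W₁ (s, 0)) s := by
        have := ((hW.differentiable (by simp)
          (s, (0:ℝ))).hasFDerivAt).comp_hasDerivAt s
          ((hasDerivAt_id s).prodMk (hasDerivAt_const s (0:ℝ)))
        simpa [Function.comp_def] using this
      have h0 : (fun t : ℝ => W (t, 0)) = fun _ => (0 : ℝ) := funext hW0
      rw [h0] at hconst
      exact hconst.unique (hasDerivAt_const _ _)
    have e1 : iteratedDeriv k (fun x : ℝ => W₁ (x, x ^ (p' + 1 + 1))) 0 = 0 := by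
      have := ih (p' + 1) (by omega) W₁ (hsm _) hzero1
      simpa using this
    have e2 : iteratedDeriv k (fun x : ℝ =>
        x ^ (p' + 1) * ((↑(p' + 1 + 1) : ℝ) * W₂ (x, x ^ (p' + 1 + 1)))) 0 = 0 :=
      flat_vanish k p' (by omega) _
        (contDiff_const.mul ((hsm _).comp (contDiff_id.prodMk (contDiff_id.pow _))))
    rw [e1, e2, add_zero]

lemma jet (k p : ℕ) (hkp : k ≤ p) (g : ℝ × ℝ → ℝ) (hg : ContDiff ℝ ∞ g)
    (b : ℝ → ℝ) (hb : ContDiff ℝ ∞ b) (c : ℝ) :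
    iteratedDeriv k (fun x : ℝ => g (x, b x + c * x ^ (p + 1))) 0
      = iteratedDeriv k (fun x : ℝ => g (x, b x)) 0 := by
  set W : ℝ × ℝ → ℝ := fun q => g (q.1, b q.1 + c * q.2) - g (q.1, b q.1) with hW
  have hcomp : ContDiff ℝ ∞ (fun q : ℝ × ℝ => g (q.1, b q.1 + c * q.2)) :=
    hg.comp (contDiff_fst.prodMk ((hb.comp contDiff_fst).add (contDiff_const.mul contDiff_snd)))
  have hWsm : ContDiff ℝ ∞ W :=
    hcomp.sub (hg.comp (contDiff_fst.prodMk (hb.comp contDiff_fst)))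
  have hW0 : ∀ s, W (s, 0) = 0 := by intro s; simp [hW]
  have hv := vanish k p hkp W hWsm hW0
  have hF : ContDiff ℝ ∞ (fun x : ℝ => g (x, b x + c * x ^ (p + 1))) :=
    hg.comp (contDiff_id.prodMk (hb.add (contDiff_const.mul (contDiff_id.pow _))))
  have hG : ContDiff ℝ ∞ (fun x : ℝ => g (x, b x)) := hg.comp (contDiff_id.prodMk hb)
  have h2 : iteratedDeriv k (fun x : ℝ => g (x, b x + c * x ^ (p + 1)) - g (x, b x)) 0 = 0 := hv
  rw [iteratedDeriv_sub' k hF hG 0] at h2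
  linarith

/-! ### Polynomial shift -/

/-- coefficient functions of the shifted polynomial -/
noncomputable def cfun (Y : ℕ → ℝ) (n i : ℕ) (μ : ℝ) : ℝ :=
  ∑ j ∈ range (n + 1 - i), ((i + j).choose i : ℝ) * Y (i + j) * μ ^ j

lemma polyshift (n : ℕ) (Y : ℕ → ℝ) (μ l : ℝ) :
    ∑ j ∈ range (n + 1), Y j * (μ + l) ^ j
      = ∑ i ∈ range (n + 1), cfun Y n i μ * l ^ i := by
  simp only [cfun]
  have lhs_eq : ∀ j ∈ range (n + 1), Y j * (μ + l) ^ j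
      = ∑ i ∈ range (n + 1),
          (if i ≤ j then ((j.choose i : ℝ) * Y j * μ ^ (j - i)) * l ^ i else 0) := by
    intro j hj
    rw [Finset.sum_ite, Finset.sum_const_zero, add_zero]
    have hfil : Finset.filter (fun i => i ≤ j) (range (n + 1)) = range (j + 1) := by
      ext i
      simp only [Finset.mem_filter, Finset.mem_range]
      simp at hj
      omega
    rw [hfil, add_comm μ l, add_pow, Finset.mul_sum]
    apply Finset.sum_congr rfl
    intro i hi
    ring
  rw [Finset.sum_congr rfl lhs_eq, Finset.sum_comm]
  apply Finset.sum_congr rfl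
  intro i hi
  rw [Finset.sum_ite, Finset.sum_const_zero, add_zero]
  have hfil : Finset.filter (fun j => i ≤ j) (range (n + 1)) = Finset.Ico i (n + 1) := by
    ext j; simp [Finset.mem_filter, Finset.mem_Ico]; omega
  rw [hfil, Finset.sum_Ico_eq_sum_range, Finset.sum_mul]
  apply Finset.sum_congr rfl
  intro j hj
  have : i + j - i = j := by omega
  rw [this]

lemma cfun_zero (n i : ℕ) (Y : ℕ → ℝ) (hi : i ≤ n) : cfun Y n i 0 = Y i := by
  rw [cfun, Finset.sum_eq_single 0]
  · simp
  · intro j _ hj; simp [zero_pow hj]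
  · intro h; simp at h; omega

lemma cfun_top (n : ℕ) (Y : ℕ → ℝ) (μ : ℝ) : cfun Y n n μ = Y n := by
  rw [cfun]
  have : n + 1 - n = 1 := by omega
  rw [this]
  simp

lemma cfun_hasDerivAt (n i : ℕ) (Y : ℕ → ℝ) (hi : i + 1 ≤ n) :
    HasDerivAt (fun μ : ℝ => cfun Y n i μ) (((i : ℝ) + 1) * Y (i + 1)) 0 := by
  simp only [cfun]
  have h := HasDerivAt.fun_sum (fun j (_ : j ∈ range (n + 1 - i)) =>
    (hasDerivAt_pow j (0:ℝ)).const_mul (((i + j).choose i : ℝ) * Y (i + j)))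
  have hval : (∑ j ∈ range (n + 1 - i),
      (((i + j).choose i : ℝ) * Y (i + j)) * ((j : ℝ) * (0:ℝ) ^ (j - 1)))
      = ((i : ℝ) + 1) * Y (i + 1) := by
    rw [Finset.sum_eq_single 1]
    · simp [Nat.choose_succ_self_right]
    · intro j _ hj
      rcases Nat.eq_zero_or_pos j with h0 | h0
      · simp [h0]
      · have : j - 1 ≠ 0 := by omega
        simp [zero_pow this]
    · intro h; simp at h; omega
  rw [hval] at h
  convert h using 2

lemma cfun_smooth (n i : ℕ) (Y : ℕ → ℝ) : ContDiff ℝ ∞ (fun μ : ℝ => cfun Y n i μ) := by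
  simp only [cfun]
  exact ContDiff.sum fun j _ => contDiff_const.mul (contDiff_id.pow j)

/-! ### The differential transform -/

/-- The differential transform `F(n)(t₀, Y)` of `λ ↦ f(t₀ + λ, ∑_{i=0}^{n} Y(i) λ^i)`
at `λ = 0`. -/
noncomputable def diffTransform (f : ℝ → ℝ → ℝ) (n : ℕ) (t₀ : ℝ) (Y : ℕ → ℝ) : ℝ :=
  (1 / (n.factorial : ℝ)) *
    iteratedDeriv n (fun l => f (t₀ + l) (∑ i ∈ Finset.range (n + 1), Y i * l ^ i)) 0

/-- parametrized version of the differential transform, with finitely many coefficients -/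
noncomputable def Phi (f : ℝ → ℝ → ℝ) (m : ℕ) (p : ℝ × (Fin (m + 1) → ℝ)) : ℝ :=
  iteratedDeriv m (fun x => f (p.1 + x) (∑ i : Fin (m + 1), p.2 i * x ^ (i : ℕ))) 0

lemma Phi_smooth (f : ℝ → ℝ → ℝ) (hf : ContDiff ℝ ∞ (fun p : ℝ × ℝ => f p.1 p.2)) (m : ℕ) :
    ContDiff ℝ ∞ (Phi f m) := by
  have hG : ContDiff ℝ ∞ (fun pz : (ℝ × (Fin (m + 1) → ℝ)) × ℝ =>
      f (pz.1.1 + pz.2) (∑ i : Fin (m + 1), pz.1.2 i * pz.2 ^ (i : ℕ))) := by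
    have hinner : ContDiff ℝ ∞ (fun pz : (ℝ × (Fin (m + 1) → ℝ)) × ℝ =>
        ((pz.1.1 + pz.2, ∑ i : Fin (m + 1), pz.1.2 i * pz.2 ^ (i : ℕ)) : ℝ × ℝ)) := by
      refine ContDiff.prodMk ((contDiff_fst.comp contDiff_fst).add contDiff_snd) ?_
      refine ContDiff.sum fun i _ => ContDiff.mul ?_ (contDiff_snd.pow _)
      exact ((ContinuousLinearMap.proj (R := ℝ) (φ := fun _ : Fin (m + 1) => ℝ) i).contDiff).comp (contDiff_snd.comp contDiff_fst)
    exact hf.comp hinner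
  exact paramSmooth m _ hG

lemma diffTransform_eq_Phi (f : ℝ → ℝ → ℝ) (m : ℕ) (s : ℝ) (Z : ℕ → ℝ) :
    diffTransform f m s Z
      = (1 / (m.factorial : ℝ)) * Phi f m (s, fun i : Fin (m + 1) => Z (i : ℕ)) := by
  rw [diffTransform, Phi]
  congr 2
  funext l
  congr 1
  exact (Fin.sum_univ_eq_sum_range (fun j => Z j * l ^ j) (m + 1)).symm

/-- Theorem 2 of the paper: the recurrence relation
`n · F(n) = ∂F(n−1)/∂t₀ + ∑_{i=0}^{n−1} (i+1) Y(i+1) ∂F(n−1)/∂Y(i)` together with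
`F(0)(t₀, Y) = f(t₀, Y(0))`. -/
theorem differential_transform_recurrence
    (f : ℝ → ℝ → ℝ) (hf : ContDiff ℝ (⊤ : ℕ∞) (fun p : ℝ × ℝ => f p.1 p.2)) :
    (∀ n : ℕ, 1 ≤ n → ∀ (t₀ : ℝ) (Y : ℕ → ℝ),
      (n : ℝ) * diffTransform f n t₀ Y =
        deriv (fun s => diffTransform f (n - 1) s Y) t₀ +
          ∑ i ∈ Finset.range n, ((i : ℝ) + 1) * Y (i + 1) *
            deriv (fun s => diffTransform f (n - 1) t₀ (Function.update Y i s)) (Y i)) ∧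
    (∀ (t₀ : ℝ) (Y : ℕ → ℝ), diffTransform f 0 t₀ Y = f t₀ (Y 0)) := by
  have hf' : ContDiff ℝ ∞ (fun p : ℝ × ℝ => f p.1 p.2) := hf.of_le (by simp)
  constructor
  · intro n hn t₀ Y
    obtain ⟨m, rfl⟩ : ∃ m, n = m + 1 := ⟨n - 1, by omega⟩
    simp only [Nat.add_sub_cancel]
    have hfactne : (m.factorial : ℝ) ≠ 0 := Nat.cast_ne_zero.mpr m.factorial_ne_zero
    have hΦ := Phi_smooth f hf' m
    have hΦdiff : Differentiable ℝ (Phi f m) := hΦ.differentiable (by simp)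
    -- Step A: the m-th derivative at μ expressed through `Phi`
    have hstepA : ∀ μ : ℝ, iteratedDeriv m
        (fun l => f (t₀ + l) (∑ j ∈ Finset.range (m + 1 + 1), Y j * l ^ j)) μ
        = Phi f m (t₀ + μ, fun i : Fin (m + 1) => cfun Y (m + 1) (i : ℕ) μ) := by
      intro μ
      have hg : ContDiff ℝ ∞ (fun q : ℝ × ℝ => f ((t₀ + μ) + q.1) q.2) :=
        hf'.comp ((contDiff_const.add contDiff_fst).prodMk contDiff_snd)
      have hb : ContDiff ℝ ∞ (fun x : ℝ =>
          ∑ i ∈ Finset.range (m + 1), cfun Y (m + 1) i μ * x ^ i) :=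
        ContDiff.sum fun i _ => contDiff_const.mul (contDiff_id.pow i)
      have h1 := congrFun (iteratedDeriv_comp_const_add m
        (fun l => f (t₀ + l) (∑ j ∈ Finset.range (m + 1 + 1), Y j * l ^ j)) μ) 0
      rw [add_zero] at h1
      rw [← h1]
      have e1 : (fun z : ℝ => (fun l => f (t₀ + l)
            (∑ j ∈ Finset.range (m + 1 + 1), Y j * l ^ j)) (μ + z))
          = fun z : ℝ => (fun q : ℝ × ℝ => f ((t₀ + μ) + q.1) q.2)
              (z, (fun x : ℝ => ∑ i ∈ Finset.range (m + 1), cfun Y (m + 1) i μ * x ^ i) z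
                + Y (m + 1) * z ^ (m + 1)) := by
        funext z
        show f (t₀ + (μ + z)) (∑ j ∈ Finset.range (m + 1 + 1), Y j * (μ + z) ^ j)
            = f ((t₀ + μ) + z) ((∑ i ∈ Finset.range (m + 1), cfun Y (m + 1) i μ * z ^ i)
                + Y (m + 1) * z ^ (m + 1))
        rw [show t₀ + (μ + z) = (t₀ + μ) + z from by ring, polyshift (m + 1) Y μ z,
          Finset.sum_range_succ, cfun_top]
      rw [e1, jet m m le_rfl (fun q : ℝ × ℝ => f ((t₀ + μ) + q.1) q.2) hg
        (fun x : ℝ => ∑ i ∈ Finset.range (m + 1), cfun Y (m + 1) i μ * x ^ i) hb (Y (m + 1)),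
        Phi]
      congr 1
      funext x
      show f ((t₀ + μ) + x) (∑ i ∈ Finset.range (m + 1), cfun Y (m + 1) i μ * x ^ i)
          = f ((t₀ + μ) + x) (∑ i : Fin (m + 1), cfun Y (m + 1) (i : ℕ) μ * x ^ (i : ℕ))
      exact congrArg _ (Fin.sum_univ_eq_sum_range (fun j => cfun Y (m + 1) j μ * x ^ j)
        (m + 1)).symm
    -- derivative of the coefficient curve
    have hγ : HasDerivAt (fun μ : ℝ =>
        ((t₀ + μ : ℝ), (fun i : Fin (m + 1) => cfun Y (m + 1) (i : ℕ) μ)))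
        ((1 : ℝ), (fun i : Fin (m + 1) => (((i : ℕ) : ℝ) + 1) * Y ((i : ℕ) + 1))) 0 := by
      refine HasDerivAt.prodMk ?_ (hasDerivAt_pi.mpr fun i => ?_)
      · simpa using ((hasDerivAt_id (0 : ℝ)).const_add t₀)
      · have hil := i.isLt
        exact cfun_hasDerivAt (m + 1) (i : ℕ) Y (by omega)
    have hpt : ((t₀ + (0 : ℝ) : ℝ), (fun i : Fin (m + 1) => cfun Y (m + 1) (i : ℕ) 0))
        = ((t₀ : ℝ), fun i : Fin (m + 1) => Y (i : ℕ)) := by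
      have h2 : (fun i : Fin (m + 1) => cfun Y (m + 1) (i : ℕ) 0)
          = fun i : Fin (m + 1) => Y (i : ℕ) :=
        funext fun i => cfun_zero (m + 1) (i : ℕ) Y (by have := i.isLt; omega)
      rw [add_zero, h2]
    have hchainD : deriv (fun μ : ℝ => Phi f m
        (t₀ + μ, fun i : Fin (m + 1) => cfun Y (m + 1) (i : ℕ) μ)) 0
        = fderiv ℝ (Phi f m) ((t₀ : ℝ), fun i : Fin (m + 1) => Y (i : ℕ))
            ((1 : ℝ), fun i : Fin (m + 1) => (((i : ℕ) : ℝ) + 1) * Y ((i : ℕ) + 1)) := by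
      have hF := (hΦdiff ((t₀ : ℝ), fun i : Fin (m + 1) => Y (i : ℕ))).hasFDerivAt
      rw [← hpt] at hF
      have heq := (hF.comp_hasDerivAt 0 hγ).deriv
      rw [hpt] at heq
      simpa [Function.comp_def] using heq
    have hLHS : diffTransform f (m + 1) t₀ Y
        = (1 / ((m + 1).factorial : ℝ)) * deriv (fun μ : ℝ => Phi f m
            (t₀ + μ, fun i : Fin (m + 1) => cfun Y (m + 1) (i : ℕ) μ)) 0 := by
      rw [diffTransform, iteratedDeriv_succ]
      congr 2
      exact funext hstepA
    -- decomposition of the direction vector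
    have hsumvec : (∑ i : Fin (m + 1), ((((i : ℕ) : ℝ) + 1) * Y ((i : ℕ) + 1))
          • ((0 : ℝ), (Pi.single i 1 : Fin (m + 1) → ℝ)))
        = ((0 : ℝ), fun i : Fin (m + 1) => (((i : ℕ) : ℝ) + 1) * Y ((i : ℕ) + 1)) := by
      rw [Prod.ext_iff]
      constructor
      · rw [Prod.fst_sum]; simp
      · rw [Prod.snd_sum]
        have hterm : ∀ i ∈ (Finset.univ : Finset (Fin (m + 1))),
            (((((i : ℕ) : ℝ) + 1) * Y ((i : ℕ) + 1)) • ((0 : ℝ), (Pi.single i 1 : Fin (m + 1) → ℝ))).2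
              = Pi.single i ((((i : ℕ) : ℝ) + 1) * Y ((i : ℕ) + 1)) := by
          intro i _
          show ((((i : ℕ) : ℝ) + 1) * Y ((i : ℕ) + 1)) • (Pi.single i 1 : Fin (m + 1) → ℝ) = _
          rw [← Pi.single_smul, smul_eq_mul, mul_one]
        rw [Finset.sum_congr rfl hterm, Finset.univ_sum_single]
    have hvec : ((1 : ℝ), (fun i : Fin (m + 1) => (((i : ℕ) : ℝ) + 1) * Y ((i : ℕ) + 1)))
        = ((1 : ℝ), (0 : Fin (m + 1) → ℝ))
          + ∑ i : Fin (m + 1), ((((i : ℕ) : ℝ) + 1) * Y ((i : ℕ) + 1))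
              • ((0 : ℝ), (Pi.single i 1 : Fin (m + 1) → ℝ)) := by
      rw [hsumvec]
      simp [Prod.ext_iff]
    have hdecomp : fderiv ℝ (Phi f m) ((t₀ : ℝ), fun i : Fin (m + 1) => Y (i : ℕ))
          ((1 : ℝ), fun i : Fin (m + 1) => (((i : ℕ) : ℝ) + 1) * Y ((i : ℕ) + 1))
        = fderiv ℝ (Phi f m) ((t₀ : ℝ), fun i : Fin (m + 1) => Y (i : ℕ))
            ((1 : ℝ), (0 : Fin (m + 1) → ℝ))
          + ∑ i : Fin (m + 1), ((((i : ℕ) : ℝ) + 1) * Y ((i : ℕ) + 1))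
              * fderiv ℝ (Phi f m) ((t₀ : ℝ), fun i : Fin (m + 1) => Y (i : ℕ))
                  ((0 : ℝ), (Pi.single i 1 : Fin (m + 1) → ℝ)) := by
      rw [hvec, map_add, map_sum]
      congr 1
      exact Finset.sum_congr rfl fun i _ => by rw [map_smul, smul_eq_mul]
    -- the t₀-derivative term
    have htermT : deriv (fun s => diffTransform f m s Y) t₀
        = (1 / (m.factorial : ℝ)) * fderiv ℝ (Phi f m)
            ((t₀ : ℝ), fun i : Fin (m + 1) => Y (i : ℕ)) ((1 : ℝ), (0 : Fin (m + 1) → ℝ)) := by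
      have hfun : (fun s => diffTransform f m s Y)
          = fun s => (1 / (m.factorial : ℝ)) * Phi f m (s, fun i : Fin (m + 1) => Y (i : ℕ)) :=
        funext fun s => diffTransform_eq_Phi f m s Y
      rw [hfun, deriv_const_mul_field]
      congr 1
      exact (((hΦdiff _).hasFDerivAt).comp_hasDerivAt t₀
        ((hasDerivAt_id t₀).prodMk (hasDerivAt_const t₀ _))).deriv
    -- the Y i derivative terms
    have htermY : ∀ i : Fin (m + 1),
        deriv (fun s => diffTransform f m t₀ (Function.update Y (i : ℕ) s)) (Y (i : ℕ))
          = (1 / (m.factorial : ℝ)) * fderiv ℝ (Phi f m)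
              ((t₀ : ℝ), fun j : Fin (m + 1) => Y (j : ℕ)) ((0 : ℝ), (Pi.single i 1 : Fin (m + 1) → ℝ)) := by
      intro i
      have hupd : (fun s => diffTransform f m t₀ (Function.update Y (i : ℕ) s))
          = fun s => (1 / (m.factorial : ℝ)) * Phi f m
              ((t₀ : ℝ), Function.update (fun j : Fin (m + 1) => Y (j : ℕ)) i s) := by
        funext s
        have hfe : (fun j : Fin (m + 1) => Function.update Y (i : ℕ) s (j : ℕ))
            = Function.update (fun j : Fin (m + 1) => Y (j : ℕ)) i s := by
          funext j
          simp only [Function.update_apply, Fin.ext_iff]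
        rw [diffTransform_eq_Phi, hfe]
      rw [hupd, deriv_const_mul_field]
      congr 1
      have hcurve : HasDerivAt (fun s : ℝ =>
          ((t₀ : ℝ), Function.update (fun j : Fin (m + 1) => Y (j : ℕ)) i s))
          ((0 : ℝ), (Pi.single i 1 : Fin (m + 1) → ℝ)) (Y (i : ℕ)) := by
        refine (hasDerivAt_const _ t₀).prodMk (hasDerivAt_pi.mpr fun j => ?_)
        by_cases hji : j = i
        · subst hji
          have hfn : (fun s : ℝ => Function.update (fun j' : Fin (m + 1) => Y (j' : ℕ)) j s j)
              = fun s : ℝ => s := by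
            funext s; simp
          rw [hfn, Pi.single_eq_same]
          exact hasDerivAt_id _
        · have hfn : (fun s : ℝ => Function.update (fun j' : Fin (m + 1) => Y (j' : ℕ)) i s j)
              = fun _ : ℝ => Y (j : ℕ) := by
            funext s; simp [Function.update_apply, hji]
          rw [hfn, Pi.single_eq_of_ne hji]
          exact hasDerivAt_const _ _
      have hptu : ((t₀ : ℝ), Function.update (fun j : Fin (m + 1) => Y (j : ℕ)) i (Y (i : ℕ)))
          = ((t₀ : ℝ), fun j : Fin (m + 1) => Y (j : ℕ)) := by
        rw [Function.update_eq_self]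
      have hF := (hΦdiff ((t₀ : ℝ), fun j : Fin (m + 1) => Y (j : ℕ))).hasFDerivAt
      rw [← hptu] at hF
      have heq := (hF.comp_hasDerivAt _ hcurve).deriv
      rw [hptu] at heq
      simpa [Function.comp_def] using heq
    -- final assembly
    have hsumR : ∑ i ∈ Finset.range (m + 1), ((i : ℝ) + 1) * Y (i + 1)
          * deriv (fun s => diffTransform f m t₀ (Function.update Y i s)) (Y i)
        = ∑ i : Fin (m + 1), ((((i : ℕ) : ℝ) + 1) * Y ((i : ℕ) + 1))
            * ((1 / (m.factorial : ℝ)) * fderiv ℝ (Phi f m)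
                ((t₀ : ℝ), fun j : Fin (m + 1) => Y (j : ℕ)) ((0 : ℝ), (Pi.single i 1 : Fin (m + 1) → ℝ))) := by
      rw [← Fin.sum_univ_eq_sum_range (fun i => ((i : ℝ) + 1) * Y (i + 1)
        * deriv (fun s => diffTransform f m t₀ (Function.update Y i s)) (Y i)) (m + 1)]
      exact Finset.sum_congr rfl fun i _ => by rw [htermY i]
    rw [hLHS, hchainD, hdecomp, htermT, hsumR]
    have hfact2 : (((m : ℕ) : ℝ) + 1) * (1 / (((m + 1).factorial : ℝ))) = 1 / (m.factorial : ℝ) := by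
      have h1 : ((m : ℝ) + 1) ≠ 0 := by positivity
      rw [Nat.factorial_succ]
      push_cast
      field_simp
    push_cast
    rw [← mul_assoc, hfact2, mul_add, Finset.mul_sum]
    congr 1
    exact Finset.sum_congr rfl fun i _ => by ring
  · intro t₀ Y
    simp [diffTransform, iteratedDeriv_zero, Finset.sum_range_one]
end

section
/- Let m ∈ ℕ and let f : ℝ → (Fin m → ℝ) → ℝ be such that the uncurried map (t, x) ↦ f t x is infinitely differentiable. For n ∈ ℕ, t₀ ∈ ℝ and Y : Fin m → ℕ → ℝ define F(n)(t₀, Y) = (1/n!) · dⁿ/dλⁿ [ f(t₀ + λ, (∑_{i=0}^{n} Y_j(i)·λ^i)_j) ] evaluated at λ = 0. Then for every n ≥ 1, n · F(n)(t₀, Y) = ∂F(n−1)/∂t₀ (t₀, Y) + ∑_{j=1}^{m} ∑_{k=0}^{n−1} (k+1)·Y_j(k+1) · ∂F(n−1)/∂Y_j(k) (t₀, Y), where ∂F(n−1)/∂t₀ is the derivative of s ↦ F(n−1)(s, Y) at s = t₀ and ∂F(n−1)/∂Y_j(k) is the derivative of s ↦ F(n−1)(t₀, Y with the (j,k)-entry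 replaced by s) at s = Y_j(k). Moreover F(0)(t₀, Y) = f(t₀, (Y_j(0))_j). -/
open scoped ContDiff
open Function Set


section Helpers

lemma natle : ∀ n : ℕ, ((n : ℕ∞) : WithTop ℕ∞) ≤ ∞ := fun n => by exact_mod_cast le_top

lemma my_iteratedDeriv_add {n : ℕ} {f g : ℝ → ℝ} (hf : ContDiff ℝ ∞ f) (hg : ContDiff ℝ ∞ g)
    (x : ℝ) :
    iteratedDeriv n (fun y => f y + g y) x = iteratedDeriv n f x + iteratedDeriv n g x := by
  simp only [← iteratedDerivWithin_univ]
  exact iteratedDerivWithin_add (Set.mem_univ x) uniqueDiffOn_univ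
    (hf.contDiffOn.of_le (natle n) x (Set.mem_univ x)) (hg.contDiffOn.of_le (natle n) x (Set.mem_univ x))

lemma my_iteratedDeriv_const_mul {n : ℕ} (c : ℝ) {f : ℝ → ℝ} (hf : ContDiff ℝ ∞ f) (x : ℝ) :
    iteratedDeriv n (fun y => c * f y) x = c * iteratedDeriv n f x := by
  simp only [← iteratedDerivWithin_univ]
  exact iteratedDerivWithin_const_mul (Set.mem_univ x) uniqueDiffOn_univ c
    (hf.contDiffOn.of_le (natle n) x (Set.mem_univ x))

lemma my_iteratedDeriv_sum {n : ℕ} {ι : Type*} (s : Finset ι) (f : ι → ℝ → ℝ)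
    (hf : ∀ i ∈ s, ContDiff ℝ ∞ (f i)) (x : ℝ) :
    iteratedDeriv n (fun y => ∑ i ∈ s, f i y) x = ∑ i ∈ s, iteratedDeriv n (f i) x := by
  classical
  induction s using Finset.induction with
  | empty =>
    simp only [Finset.sum_empty]
    rw [show (fun _ : ℝ => (0:ℝ)) = fun y => (0:ℝ) * (0:ℝ) from by funext; ring,
      my_iteratedDeriv_const_mul 0 contDiff_const]
    simp
  | insert a s' hnot ih =>
    simp only [Finset.sum_insert hnot]
    rw [my_iteratedDeriv_add (hf a (Finset.mem_insert_self a s'))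
      (ContDiff.sum fun i hi => hf i (Finset.mem_insert_of_mem hi)),
      ih fun i hi => hf i (Finset.mem_insert_of_mem hi)]

/-- k-th derivative at 0 of `l^n * φ l` vanishes for `k < n`. -/
lemma iteratedDeriv_pow_mul_eq_zero : ∀ (k n : ℕ), k < n → ∀ (φ : ℝ → ℝ), ContDiff ℝ ∞ φ →
    iteratedDeriv k (fun l => l ^ n * φ l) 0 = 0 := by
  intro k
  induction k with
  | zero =>
    intro n hn φ hφ
    simp [zero_pow (by omega : n ≠ 0)]
  | succ k ih =>
    intro n hn φ hφ
    rw [iteratedDeriv_succ']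
    have hφd : Differentiable ℝ φ := hφ.differentiable (by simp)
    have hd : (deriv fun l => l ^ n * φ l) =
        fun l => l ^ (n - 1) * ((n : ℝ) * φ l + l * deriv φ l) := by
      funext l
      rw [deriv_fun_mul (differentiableAt_pow n) (hφd l), deriv_pow_field]
      have hln : l ^ n = l ^ (n - 1) * l := by
        conv_lhs => rw [show n = (n - 1) + 1 by omega]
        rw [pow_succ]
      rw [hln]; ring
    rw [hd]
    exact ih (n - 1) (by omega) _
      (((contDiff_const.mul hφ).add
        (contDiff_id.mul (contDiff_infty_iff_deriv.mp hφ).2)))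
end Helpers

variable {E : Type*} [NormedAddCommGroup E] [NormedSpace ℝ E]

/-- derivative along an affine line. -/
lemma hasDerivAt_comp_line {F : E → ℝ} (hF : ContDiff ℝ ∞ F) (γ : ℝ → E) (v : E) (s : ℝ)
    (hγ : HasDerivAt γ v s) : HasDerivAt (fun s => F (γ s)) (fderiv ℝ F (γ s) v) s := by
  have h := ((hF.differentiable (by simp)) (γ s)).hasFDerivAt
  exact h.comp_hasDerivAt s hγ

lemma contDiff_deriv_snd {G : ℝ × ℝ → ℝ} (hG : ContDiff ℝ ∞ G) :
    ContDiff ℝ ∞ (fun p : ℝ × ℝ => deriv (fun l => G (p.1, l)) p.2) := by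
  have h1 : ∀ p : ℝ × ℝ, deriv (fun l => G (p.1, l)) p.2 = fderiv ℝ G p ((0:ℝ), (1:ℝ)) := by
    intro p
    have hline : HasDerivAt (fun l : ℝ => ((p.1, l) : ℝ × ℝ)) ((0:ℝ),(1:ℝ)) p.2 :=
      (hasDerivAt_const p.2 p.1).prodMk (hasDerivAt_id p.2)
    have := hasDerivAt_comp_line hG _ _ _ hline
    exact this.deriv
  simp only [h1]
  exact (hG.fderiv_right (m := ∞) (by simp)).clm_apply contDiff_const

/-- Clairaut for smooth functions on ℝ². -/
lemma clairaut {G : ℝ × ℝ → ℝ} (hG : ContDiff ℝ ∞ G) (s₀ l₀ : ℝ) :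
    deriv (fun s => deriv (fun l => G (s, l)) l₀) s₀ =
      deriv (fun l => deriv (fun s => G (s, l)) s₀) l₀ := by
  have hG1 : ContDiff ℝ ∞ (fderiv ℝ G) := hG.fderiv_right (m := ∞) (by simp)
  have hGd : Differentiable ℝ (fderiv ℝ G) :=
    hG1.differentiable (by simp)
  have hsymm : fderiv ℝ (fderiv ℝ G) (s₀, l₀) ((1:ℝ),(0:ℝ)) ((0:ℝ),(1:ℝ)) =
      fderiv ℝ (fderiv ℝ G) (s₀, l₀) ((0:ℝ),(1:ℝ)) ((1:ℝ),(0:ℝ)) :=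
    (hG.contDiffAt.isSymmSndFDerivAt (by
      simp
      rw [show (2 : WithTop ℕ∞) = ((2 : ℕ∞) : WithTop ℕ∞) from rfl]
      exact_mod_cast (le_top : (2:ℕ∞) ≤ ⊤))) _ _
  -- left side
  have hL : deriv (fun s => deriv (fun l => G (s, l)) l₀) s₀ =
      fderiv ℝ (fderiv ℝ G) (s₀, l₀) ((1:ℝ),(0:ℝ)) ((0:ℝ),(1:ℝ)) := by
    have h1 : (fun s => deriv (fun l => G (s, l)) l₀) =
        fun s => fderiv ℝ G (s, l₀) ((0:ℝ),(1:ℝ)) := by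
      funext s
      exact (hasDerivAt_comp_line hG _ _ _
        ((hasDerivAt_const l₀ s).prodMk (hasDerivAt_id l₀))).deriv
    rw [h1]
    have hline : HasDerivAt (fun s : ℝ => ((s, l₀) : ℝ × ℝ)) ((1:ℝ),(0:ℝ)) s₀ :=
      (hasDerivAt_id s₀).prodMk (hasDerivAt_const s₀ l₀)
    have hB : HasDerivAt (fun s => fderiv ℝ G (s, l₀))
        (fderiv ℝ (fderiv ℝ G) (s₀, l₀) ((1:ℝ),(0:ℝ))) s₀ :=
      (hGd (s₀, l₀)).hasFDerivAt.comp_hasDerivAt s₀ hline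
    exact (hB.clm_apply (hasDerivAt_const _ _)).deriv.trans (by simp)
  have hR : deriv (fun l => deriv (fun s => G (s, l)) s₀) l₀ =
      fderiv ℝ (fderiv ℝ G) (s₀, l₀) ((0:ℝ),(1:ℝ)) ((1:ℝ),(0:ℝ)) := by
    have h1 : (fun l => deriv (fun s => G (s, l)) s₀) =
        fun l => fderiv ℝ G (s₀, l) ((1:ℝ),(0:ℝ)) := by
      funext l
      exact (hasDerivAt_comp_line hG _ _ _
        ((hasDerivAt_id s₀).prodMk (hasDerivAt_const s₀ l))).deriv
    rw [h1]
    have hline : HasDerivAt (fun l : ℝ => ((s₀, l) : ℝ × ℝ)) ((0:ℝ),(1:ℝ)) l₀ :=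
      (hasDerivAt_const l₀ s₀).prodMk (hasDerivAt_id l₀)
    have hB : HasDerivAt (fun l => fderiv ℝ G (s₀, l))
        (fderiv ℝ (fderiv ℝ G) (s₀, l₀) ((0:ℝ),(1:ℝ))) l₀ :=
      (hGd (s₀, l₀)).hasFDerivAt.comp_hasDerivAt l₀ hline
    exact (hB.clm_apply (hasDerivAt_const _ _)).deriv.trans (by simp)
  rw [hL, hR, hsymm]

/-- Differentiating a parameter-dependent iterated derivative. -/
lemma hasDerivAt_iteratedDeriv_param :
    ∀ (k : ℕ) (G : ℝ × ℝ → ℝ), ContDiff ℝ ∞ G → ∀ s₀ : ℝ,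
    HasDerivAt (fun s => iteratedDeriv k (fun l => G (s, l)) 0)
      (iteratedDeriv k (fun l => deriv (fun s => G (s, l)) s₀) 0) s₀ := by
  intro k
  induction k with
  | zero =>
    intro G hG s₀
    simp only [iteratedDeriv_zero]
    have := hasDerivAt_comp_line hG (fun s : ℝ => ((s, (0:ℝ)) : ℝ × ℝ)) ((1:ℝ),(0:ℝ)) s₀
      ((hasDerivAt_id s₀).prodMk (hasDerivAt_const s₀ 0))
    have h2 : deriv (fun s => G (s, 0)) s₀ = fderiv ℝ G (s₀, 0) ((1:ℝ),(0:ℝ)) := this.deriv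
    rw [h2]; exact this
  | succ k ih =>
    intro G hG s₀
    have hD : ContDiff ℝ ∞ (fun p : ℝ × ℝ => deriv (fun l => G (p.1, l)) p.2) :=
      contDiff_deriv_snd hG
    have hrw : (fun s => iteratedDeriv (k+1) (fun l => G (s, l)) 0) =
        (fun s => iteratedDeriv k (fun l => deriv (fun l' => G (s, l')) l) 0) := by
      funext s
      rw [iteratedDeriv_succ']
    have h2 := ih _ hD s₀
    rw [hrw]
    convert h2 using 1
    have h3 : (fun l => deriv (fun s => deriv (fun l' => G (s, l')) l) s₀) =
        deriv (fun l => deriv (fun s => G (s, l)) s₀) := by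
      funext l
      rw [clairaut hG s₀ l]
    rw [iteratedDeriv_succ', ← h3]

/-- Constancy of the parametrized iterated derivative when the `s`-derivative is
`l ^ n` times a smooth function. -/
lemma iteratedDeriv_param_const {G φ : ℝ × ℝ → ℝ} (hG : ContDiff ℝ ∞ G) (hφ : ContDiff ℝ ∞ φ)
    {k n : ℕ} (hk : k < n)
    (H : ∀ s l : ℝ, deriv (fun s' => G (s', l)) s = l ^ n * φ (s, l)) (a b : ℝ) :
    iteratedDeriv k (fun l => G (a, l)) 0 = iteratedDeriv k (fun l => G (b, l)) 0 := by
  have key : ∀ s : ℝ, HasDerivAt (fun s => iteratedDeriv k (fun l => G (s, l)) 0) 0 s := by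
    intro s
    have h1 := hasDerivAt_iteratedDeriv_param k G hG s
    have h2 : iteratedDeriv k (fun l => deriv (fun s' => G (s', l)) s) 0 = 0 := by
      have : (fun l => deriv (fun s' => G (s', l)) s) = fun l => l ^ n * φ (s, l) := by
        funext l; exact H s l
      rw [this]
      exact iteratedDeriv_pow_mul_eq_zero k n hk _
        (hφ.comp ((contDiff_const (c := s)).prodMk contDiff_id))
    rwa [h2] at h1
  have hderiv : ∀ s : ℝ, deriv (fun s => iteratedDeriv k (fun l => G (s, l)) 0) s = 0 :=
    fun s => (key s).deriv
  have hdiff : Differentiable ℝ (fun s => iteratedDeriv k (fun l => G (s, l)) 0) :=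
    fun s => (key s).differentiableAt
  exact is_const_of_deriv_eq_zero hdiff hderiv a b



/-- The differential transform `F(n)(t₀, Y)` of
`λ ↦ f(t₀ + λ, (∑_{i=0}^{n} Y_j(i) λ^i)_j)` at `λ = 0`. -/
noncomputable def diffTransformMulti (m : ℕ) (f : ℝ → (Fin m → ℝ) → ℝ)
    (n : ℕ) (t₀ : ℝ) (Y : Fin m → ℕ → ℝ) : ℝ :=
  (1 / (n.factorial : ℝ)) *
    iteratedDeriv n
      (fun l => f (t₀ + l) (fun j => ∑ i ∈ Finset.range (n + 1), Y j i * l ^ i)) 0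

/-- Corollary 2 of the paper: the recurrence relation
`n · F(n) = ∂F(n−1)/∂t₀ + ∑_{j=1}^{m} ∑_{k=0}^{n−1} (k+1) Y_j(k+1) ∂F(n−1)/∂Y_j(k)`
together with `F(0)(t₀, Y) = f(t₀, (Y_j(0))_j)`. -/
theorem differential_transform_recurrence_multi
    (m : ℕ) (f : ℝ → (Fin m → ℝ) → ℝ)
    (hf : ContDiff ℝ (⊤ : ℕ∞) (fun p : ℝ × (Fin m → ℝ) => f p.1 p.2)) :
    (∀ n : ℕ, 1 ≤ n → ∀ (t₀ : ℝ) (Y : Fin m → ℕ → ℝ),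
      (n : ℝ) * diffTransformMulti m f n t₀ Y =
        deriv (fun s => diffTransformMulti m f (n - 1) s Y) t₀ +
          ∑ j : Fin m, ∑ k ∈ Finset.range n, ((k : ℝ) + 1) * Y j (k + 1) *
            deriv
              (fun s =>
                diffTransformMulti m f (n - 1) t₀
                  (Function.update Y j (Function.update (Y j) k s))) (Y j k)) ∧
    (∀ (t₀ : ℝ) (Y : Fin m → ℕ → ℝ),
      diffTransformMulti m f 0 t₀ Y = f t₀ (fun j => Y j 0)) := by
  have hF : ContDiff ℝ ∞ (fun p : ℝ × (Fin m → ℝ) => f p.1 p.2) := hf.of_le (by simp)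
  set F : ℝ × (Fin m → ℝ) → ℝ := fun p => f p.1 p.2 with hFdef
  have hF1 : ContDiff ℝ ∞ (fderiv ℝ F) := hF.fderiv_right (m := ∞) (by simp)
  have hFd : Differentiable ℝ F :=
    hF.differentiable (by simp)
  have hF1d : Differentiable ℝ (fderiv ℝ F) :=
    hF1.differentiable (by simp)
  have hFω1 : ContDiff ℝ ∞ (fderiv ℝ F) := hF1
  have hF2 : ContDiff ℝ ∞ (fderiv ℝ (fderiv ℝ F)) := hFω1.fderiv_right (m := ∞) (by simp)
  constructor
  · intro n hn t₀ Y
    obtain ⟨k, rfl⟩ : ∃ k, n = k + 1 := ⟨n - 1, by omega⟩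
    simp only [Nat.add_sub_cancel]
    -- the polynomials
    set Q : ℝ → Fin m → ℝ := fun l j => ∑ i ∈ Finset.range (k + 1), Y j i * l ^ i with hQdef
    set R : ℝ → Fin m → ℝ :=
      fun l j => ∑ i ∈ Finset.range (k + 1), ((i : ℝ) + 1) * Y j (i + 1) * l ^ i with hRdef
    set c : Fin m → ℝ := fun j => Y j (k + 1) with hcdef
    have hQ : ContDiff ℝ ∞ Q :=
      contDiff_pi.mpr fun j => ContDiff.sum fun i _ => contDiff_const.mul (contDiff_id.pow i)
    have hR : ContDiff ℝ ∞ R :=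
      contDiff_pi.mpr fun j => ContDiff.sum fun i _ => contDiff_const.mul (contDiff_id.pow i)
    have hkfac : ((k + 1).factorial : ℝ) = ((k : ℝ) + 1) * (k.factorial : ℝ) := by
      rw [Nat.factorial_succ]; push_cast; ring
    have hfacne : (k.factorial : ℝ) ≠ 0 := Nat.cast_ne_zero.mpr k.factorial_ne_zero
    -- smoothness of vector evaluations of the derivative along the base curve
    have hsm : ∀ v : ℝ × (Fin m → ℝ), ContDiff ℝ ∞ (fun l : ℝ => fderiv ℝ F (t₀ + l, Q l) v) :=
      fun v => ((hF1.comp ((contDiff_const.add contDiff_id).prodMk hQ)).clm_apply contDiff_const)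
    ----------------------------------------------------------------
    -- Step 1 : LHS
    ----------------------------------------------------------------
    have hPd : ∀ l : ℝ, HasDerivAt
        (fun l : ℝ => (fun j => ∑ i ∈ Finset.range (k + 1 + 1), Y j i * l ^ i : Fin m → ℝ))
        (R l) l := by
      intro l
      rw [hasDerivAt_pi]
      intro j
      have h1 : HasDerivAt (fun l : ℝ => ∑ i ∈ Finset.range (k + 1 + 1), Y j i * l ^ i)
          (∑ i ∈ Finset.range (k + 1 + 1), Y j i * ((i : ℝ) * l ^ (i - 1))) l :=
        HasDerivAt.fun_sum fun i _ => (hasDerivAt_pow i l).const_mul (Y j i)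
      refine h1.congr_deriv (Eq.symm ?_)
      rw [Finset.sum_range_succ']
      simp only [Nat.cast_zero, zero_mul, mul_zero, add_zero, pow_zero]
      refine Finset.sum_congr rfl fun i _ => ?_
      rw [Nat.add_sub_cancel]
      push_cast
      ring
    have hgd : ∀ l : ℝ, HasDerivAt
        (fun l => f (t₀ + l) (fun j => ∑ i ∈ Finset.range (k + 1 + 1), Y j i * l ^ i))
        (fderiv ℝ F (t₀ + l, fun j => ∑ i ∈ Finset.range (k + 1 + 1), Y j i * l ^ i)
          ((1 : ℝ), R l)) l := by
      intro l
      have hγ : HasDerivAt (fun l : ℝ =>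
          ((t₀ + l, fun j => ∑ i ∈ Finset.range (k + 1 + 1), Y j i * l ^ i) :
            ℝ × (Fin m → ℝ))) ((1 : ℝ), R l) l :=
        (HasDerivAt.const_add t₀ (hasDerivAt_id l)).prodMk (hPd l)
      exact hasDerivAt_comp_line hF _ _ _ hγ
    have hLHS : ((k : ℝ) + 1) * diffTransformMulti m f (k + 1) t₀ Y =
        (1 / (k.factorial : ℝ)) * iteratedDeriv k
          (fun l => fderiv ℝ F (t₀ + l, fun j => ∑ i ∈ Finset.range (k + 1 + 1), Y j i * l ^ i)
            ((1:ℝ), R l)) 0 := by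
      rw [diffTransformMulti, iteratedDeriv_succ']
      have hder : (deriv fun l =>
          f (t₀ + l) (fun j => ∑ i ∈ Finset.range (k + 1 + 1), Y j i * l ^ i)) =
          fun l => fderiv ℝ F (t₀ + l, fun j => ∑ i ∈ Finset.range (k + 1 + 1), Y j i * l ^ i)
            ((1:ℝ), R l) := funext fun l => (hgd l).deriv
      rw [hder, hkfac]
      field_simp
    ----------------------------------------------------------------
    -- Step 2 : the t₀-derivative term
    ----------------------------------------------------------------
    have hT1 : deriv (fun s => diffTransformMulti m f k s Y) t₀ =
        (1 / (k.factorial : ℝ)) * iteratedDeriv k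
          (fun l => fderiv ℝ F (t₀ + l, Q l) ((1:ℝ), (0 : Fin m → ℝ))) 0 := by
      have hG₁ : ContDiff ℝ ∞ (fun p : ℝ × ℝ =>
          f (p.1 + p.2) (fun j => ∑ i ∈ Finset.range (k + 1), Y j i * p.2 ^ i)) :=
        hF.comp ((contDiff_fst.add contDiff_snd).prodMk (hQ.comp contDiff_snd))
      have hswap := hasDerivAt_iteratedDeriv_param k
        (fun p : ℝ × ℝ => f (p.1 + p.2) (fun j => ∑ i ∈ Finset.range (k + 1), Y j i * p.2 ^ i))
        hG₁ t₀
      have hinner : (fun l : ℝ => deriv (fun s =>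
            f (s + l) (fun j => ∑ i ∈ Finset.range (k + 1), Y j i * l ^ i)) t₀)
          = fun l => fderiv ℝ F (t₀ + l, Q l) ((1:ℝ), (0 : Fin m → ℝ)) := by
        funext l
        have hγ : HasDerivAt (fun s : ℝ => ((s + l, Q l) : ℝ × (Fin m → ℝ)))
            ((1:ℝ), (0 : Fin m → ℝ)) t₀ :=
          ((hasDerivAt_id t₀).add_const l).prodMk (hasDerivAt_const t₀ (Q l))
        exact (hasDerivAt_comp_line hF _ _ _ hγ).deriv
      have h2 : HasDerivAt (fun s => iteratedDeriv k
            (fun l => f (s + l) (fun j => ∑ i ∈ Finset.range (k + 1), Y j i * l ^ i)) 0)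
          (iteratedDeriv k (fun l => fderiv ℝ F (t₀ + l, Q l) ((1:ℝ), (0 : Fin m → ℝ))) 0) t₀ := by
        rw [← hinner]; exact hswap
      exact (h2.const_mul (1 / (k.factorial : ℝ))).deriv
    ----------------------------------------------------------------
    -- Step 3 : the Y-derivative terms
    ----------------------------------------------------------------
    have hT2 : ∀ j : Fin m, ∀ k' ∈ Finset.range (k + 1),
        deriv (fun s => diffTransformMulti m f k t₀
            (Function.update Y j (Function.update (Y j) k' s))) (Y j k')
        = (1 / (k.factorial : ℝ)) * iteratedDeriv k
            (fun l => l ^ k' * fderiv ℝ F (t₀ + l, Q l) ((0:ℝ), Pi.single j 1)) 0 := by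
      intro j k' hk'
      have hG₂ : ContDiff ℝ ∞ (fun p : ℝ × ℝ =>
          f (t₀ + p.2) (Q p.2 + (p.1 - Y j k') • (p.2 ^ k' • (Pi.single j (1:ℝ) : Fin m → ℝ)))) :=
        hF.comp ((contDiff_const.add contDiff_snd).prodMk
          ((hQ.comp contDiff_snd).add ((contDiff_fst.sub contDiff_const).smul
            ((contDiff_snd.pow k').smul contDiff_const))))
      have hfun : (fun s => diffTransformMulti m f k t₀
            (Function.update Y j (Function.update (Y j) k' s)))
          = fun s => (1 / (k.factorial : ℝ)) * iteratedDeriv k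
              (fun l => f (t₀ + l) (Q l + (s - Y j k') • (l ^ k' • (Pi.single j (1:ℝ) : Fin m → ℝ)))) 0 := by
        funext s
        rw [diffTransformMulti]
        have harg : ∀ l : ℝ, (fun j' => ∑ i ∈ Finset.range (k + 1),
              Function.update Y j (Function.update (Y j) k' s) j' i * l ^ i)
            = Q l + (s - Y j k') • (l ^ k' • (Pi.single j (1:ℝ) : Fin m → ℝ)) := by
          intro l
          funext j'
          rcases eq_or_ne j' j with rfl | hj
          · simp only [Function.update_self]
            have hterm : ∀ i ∈ Finset.range (k + 1), Function.update (Y j') k' s i * l ^ i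
                = Y j' i * l ^ i + (if i = k' then (s - Y j' k') * l ^ i else 0) := by
              intro i _
              rcases eq_or_ne i k' with rfl | hi
              · rw [Function.update_self]; simp; ring
              · rw [Function.update_of_ne hi]; simp [hi]
            rw [Finset.sum_congr rfl hterm, Finset.sum_add_distrib,
              Finset.sum_ite_eq' (Finset.range (k + 1)) k']
            simp only [if_pos hk', Pi.add_apply, Pi.smul_apply, Pi.single_eq_same,
              smul_eq_mul, hQdef]
            ring
          · rw [Function.update_of_ne hj]
            simp only [Pi.add_apply, Pi.smul_apply, Pi.single_eq_of_ne hj, smul_eq_mul, hQdef,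
              mul_zero, add_zero]
        simp only [harg]
      rw [hfun]
      have hswap := hasDerivAt_iteratedDeriv_param k
        (fun p : ℝ × ℝ => f (t₀ + p.2) (Q p.2 + (p.1 - Y j k') • (p.2 ^ k' • (Pi.single j (1:ℝ) : Fin m → ℝ))))
        hG₂ (Y j k')
      have hinner : (fun l : ℝ => deriv (fun s =>
            f (t₀ + l) (Q l + (s - Y j k') • (l ^ k' • (Pi.single j (1:ℝ) : Fin m → ℝ)))) (Y j k'))
          = fun l => l ^ k' * fderiv ℝ F (t₀ + l, Q l) ((0:ℝ), Pi.single j 1) := by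
        funext l
        have hγ : HasDerivAt (fun s : ℝ =>
            ((t₀ + l, Q l + (s - Y j k') • (l ^ k' • (Pi.single j (1:ℝ) : Fin m → ℝ))) : ℝ × (Fin m → ℝ)))
            ((0:ℝ), l ^ k' • (Pi.single j (1:ℝ) : Fin m → ℝ)) (Y j k') := by
          refine (hasDerivAt_const _ _).prodMk ?_
          have h5 := (((hasDerivAt_id (Y j k')).sub_const (Y j k')).smul_const
            (l ^ k' • (Pi.single j (1:ℝ) : Fin m → ℝ))).const_add (Q l)
          simpa using h5
        have h3 : (fderiv ℝ F (t₀ + l, Q l + ((Y j k' - Y j k') •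
              (l ^ k' • (Pi.single j (1:ℝ) : Fin m → ℝ))))) ((0:ℝ), l ^ k' • (Pi.single j (1:ℝ) : Fin m → ℝ))
            = l ^ k' * fderiv ℝ F (t₀ + l, Q l) ((0:ℝ), Pi.single j 1) := by
          rw [sub_self, zero_smul, add_zero]
          have hv : (((0:ℝ), l ^ k' • (Pi.single j (1:ℝ) : Fin m → ℝ)) : ℝ × (Fin m → ℝ))
              = l ^ k' • (((0:ℝ), (Pi.single j (1:ℝ) : Fin m → ℝ)) : ℝ × (Fin m → ℝ)) := by
            simp [Prod.smul_mk]
          rw [hv, map_smul, smul_eq_mul]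
        exact ((hasDerivAt_comp_line hF _ _ _ hγ).deriv).trans h3
      have h2 : HasDerivAt (fun s => iteratedDeriv k
            (fun l => f (t₀ + l) (Q l + (s - Y j k') • (l ^ k' • (Pi.single j (1:ℝ) : Fin m → ℝ)))) 0)
          (iteratedDeriv k
            (fun l => l ^ k' * fderiv ℝ F (t₀ + l, Q l) ((0:ℝ), Pi.single j 1)) 0) (Y j k') := by
        rw [← hinner]; exact hswap
      exact (h2.const_mul (1 / (k.factorial : ℝ))).deriv
    ----------------------------------------------------------------
    -- Step 4 : combining the sum of Y-derivative terms
    ----------------------------------------------------------------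
    have hRHSsum : ∑ j : Fin m, ∑ k' ∈ Finset.range (k + 1), ((k' : ℝ) + 1) * Y j (k' + 1) *
          deriv (fun s => diffTransformMulti m f k t₀
            (Function.update Y j (Function.update (Y j) k' s))) (Y j k')
        = (1 / (k.factorial : ℝ)) * iteratedDeriv k
            (fun l => ∑ j : Fin m, R l j *
              fderiv ℝ F (t₀ + l, Q l) ((0:ℝ), Pi.single j 1)) 0 := by
      have step1 : ∀ j : Fin m, ∑ k' ∈ Finset.range (k + 1), ((k' : ℝ) + 1) * Y j (k' + 1) *
            deriv (fun s => diffTransformMulti m f k t₀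
              (Function.update Y j (Function.update (Y j) k' s))) (Y j k')
          = (1 / (k.factorial : ℝ)) *
              iteratedDeriv k (fun l => R l j *
                fderiv ℝ F (t₀ + l, Q l) ((0:ℝ), Pi.single j 1)) 0 := by
        intro j
        have e1 : ∑ k' ∈ Finset.range (k + 1), ((k' : ℝ) + 1) * Y j (k' + 1) *
              deriv (fun s => diffTransformMulti m f k t₀
                (Function.update Y j (Function.update (Y j) k' s))) (Y j k')
            = (1 / (k.factorial : ℝ)) * ∑ k' ∈ Finset.range (k + 1),
                (((k' : ℝ) + 1) * Y j (k' + 1)) * iteratedDeriv k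
                  (fun l => l ^ k' * fderiv ℝ F (t₀ + l, Q l) ((0:ℝ), Pi.single j 1)) 0 := by
          rw [Finset.mul_sum]
          refine Finset.sum_congr rfl fun k' hk' => ?_
          rw [hT2 j k' hk']; ring
        rw [e1]
        congr 1
        have e2 : ∀ k' ∈ Finset.range (k + 1), (((k' : ℝ) + 1) * Y j (k' + 1)) * iteratedDeriv k
              (fun l => l ^ k' * fderiv ℝ F (t₀ + l, Q l) ((0:ℝ), Pi.single j 1)) 0
            = iteratedDeriv k (fun l => (((k' : ℝ) + 1) * Y j (k' + 1)) *
                (l ^ k' * fderiv ℝ F (t₀ + l, Q l) ((0:ℝ), Pi.single j 1))) 0 := by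
          intro k' _
          exact (my_iteratedDeriv_const_mul _
            ((contDiff_id.pow k').mul (hsm ((0:ℝ), Pi.single j 1))) 0).symm
        rw [Finset.sum_congr rfl e2]
        have hfun2 : (fun l : ℝ => R l j * fderiv ℝ F (t₀ + l, Q l) ((0:ℝ), Pi.single j 1))
            = fun l : ℝ => ∑ k' ∈ Finset.range (k + 1), (((k' : ℝ) + 1) * Y j (k' + 1)) *
                (l ^ k' * fderiv ℝ F (t₀ + l, Q l) ((0:ℝ), Pi.single j 1)) := by
          funext l
          simp only [hRdef]
          rw [Finset.sum_mul]
          exact Finset.sum_congr rfl fun k' _ => by ring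
        rw [hfun2]
        exact (my_iteratedDeriv_sum (Finset.range (k + 1)) _
          (fun k' _ => contDiff_const.mul ((contDiff_id.pow k').mul
            (hsm ((0:ℝ), Pi.single j 1)))) 0).symm
      rw [Finset.sum_congr rfl fun j _ => step1 j, ← Finset.mul_sum]
      congr 1
      exact (my_iteratedDeriv_sum Finset.univ
        (fun j l => R l j * fderiv ℝ F (t₀ + l, Q l) ((0:ℝ), Pi.single j 1))
        (fun j _ => (contDiff_pi.mp hR j).mul (hsm ((0:ℝ), Pi.single j 1))) 0).symm
    ----------------------------------------------------------------
    -- Step 5 : decomposing the direction vector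
    ----------------------------------------------------------------
    have hdecomp : ∀ l : ℝ, fderiv ℝ F (t₀ + l, Q l) ((1:ℝ), R l)
        = fderiv ℝ F (t₀ + l, Q l) ((1:ℝ), (0 : Fin m → ℝ))
          + ∑ j : Fin m, R l j * fderiv ℝ F (t₀ + l, Q l) ((0:ℝ), Pi.single j 1) := by
      intro l
      have hsingle : ∑ j : Fin m, R l j • (Pi.single j (1:ℝ) : Fin m → ℝ) = R l := by
        funext j'
        rw [Finset.sum_apply]
        simp only [Pi.smul_apply, smul_eq_mul]
        rw [Finset.sum_eq_single j']
        · simp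
        · intro b _ hb
          simp [Pi.single_eq_of_ne (Ne.symm hb)]
        · intro h
          exact absurd (Finset.mem_univ j') h
      have hvec : (((1:ℝ), R l) : ℝ × (Fin m → ℝ)) = ((1:ℝ), (0 : Fin m → ℝ))
          + ∑ j : Fin m, R l j • (((0:ℝ), (Pi.single j (1:ℝ) : Fin m → ℝ)) : ℝ × (Fin m → ℝ)) := by
        have h2 : ∀ j : Fin m, R l j • (((0:ℝ), (Pi.single j (1:ℝ) : Fin m → ℝ)) : ℝ × (Fin m → ℝ))
            = (((0:ℝ), R l j • (Pi.single j (1:ℝ) : Fin m → ℝ)) : ℝ × (Fin m → ℝ)) := fun j => by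
          rw [Prod.smul_mk, smul_zero]
        rw [Finset.sum_congr rfl fun j _ => h2 j, Prod.ext_iff]
        constructor
        · rw [Prod.fst_add, Prod.fst_sum]
          simp
        · rw [Prod.snd_add, Prod.snd_sum]
          have h3 : ∀ j : Fin m, (((0:ℝ), R l j • (Pi.single j (1:ℝ) : Fin m → ℝ)) : ℝ × (Fin m → ℝ)).2
              = R l j • (Pi.single j (1:ℝ) : Fin m → ℝ) := fun j => rfl
          rw [Finset.sum_congr rfl fun j _ => h3 j, hsingle]
          exact (zero_add _).symm
      rw [hvec, map_add, map_sum]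
      congr 1
      exact Finset.sum_congr rfl fun j _ => by rw [map_smul, smul_eq_mul]
    have hW : iteratedDeriv k (fun l => fderiv ℝ F (t₀ + l, Q l) ((1:ℝ), R l)) 0
        = iteratedDeriv k (fun l => fderiv ℝ F (t₀ + l, Q l) ((1:ℝ), (0 : Fin m → ℝ))) 0
          + iteratedDeriv k (fun l => ∑ j : Fin m, R l j *
              fderiv ℝ F (t₀ + l, Q l) ((0:ℝ), Pi.single j 1)) 0 := by
      rw [← my_iteratedDeriv_add (hsm ((1:ℝ), (0 : Fin m → ℝ)))
        (ContDiff.sum fun j _ => (contDiff_pi.mp hR j).mul (hsm ((0:ℝ), Pi.single j 1))) 0]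
      congr 1
      funext l
      exact hdecomp l
    ----------------------------------------------------------------
    -- Step 6 : replacing the degree-(k+1) curve by the degree-k curve
    ----------------------------------------------------------------
    have hPQ : iteratedDeriv k (fun l => fderiv ℝ F
          (t₀ + l, fun j => ∑ i ∈ Finset.range (k + 1 + 1), Y j i * l ^ i) ((1:ℝ), R l)) 0
        = iteratedDeriv k (fun l => fderiv ℝ F (t₀ + l, Q l) ((1:ℝ), R l)) 0 := by
      have hΘ : ContDiff ℝ ∞ (fun p : ℝ × ℝ =>
          ((t₀ + p.2, Q p.2 + p.1 • (p.2 ^ (k + 1) • c)) : ℝ × (Fin m → ℝ))) :=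
        (contDiff_const.add contDiff_snd).prodMk ((hQ.comp contDiff_snd).add
          (contDiff_fst.smul ((contDiff_snd.pow (k + 1)).smul contDiff_const)))
      have hvecsm : ContDiff ℝ ∞ (fun p : ℝ × ℝ => (((1:ℝ), R p.2) : ℝ × (Fin m → ℝ))) :=
        contDiff_const.prodMk (hR.comp contDiff_snd)
      have hG₃ : ContDiff ℝ ∞ (fun p : ℝ × ℝ =>
          fderiv ℝ F (t₀ + p.2, Q p.2 + p.1 • (p.2 ^ (k + 1) • c)) ((1:ℝ), R p.2)) :=
        (hF1.comp hΘ).clm_apply hvecsm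
      have hφ₃ : ContDiff ℝ ∞ (fun p : ℝ × ℝ =>
          (fderiv ℝ (fderiv ℝ F) (t₀ + p.2, Q p.2 + p.1 • (p.2 ^ (k + 1) • c)) ((0:ℝ), c))
            ((1:ℝ), R p.2)) :=
        ((hF2.comp hΘ).clm_apply contDiff_const).clm_apply hvecsm
      have hH : ∀ s l : ℝ, deriv (fun s' => fderiv ℝ F
            (t₀ + l, Q l + s' • (l ^ (k + 1) • c)) ((1:ℝ), R l)) s
          = l ^ (k + 1) *
            (fderiv ℝ (fderiv ℝ F) (t₀ + l, Q l + s • (l ^ (k + 1) • c)) ((0:ℝ), c))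
              ((1:ℝ), R l) := by
        intro s l
        have hγ : HasDerivAt (fun s' : ℝ =>
            ((t₀ + l, Q l + s' • (l ^ (k + 1) • c)) : ℝ × (Fin m → ℝ)))
            ((0:ℝ), l ^ (k + 1) • c) s := by
          refine (hasDerivAt_const _ _).prodMk ?_
          simpa using ((hasDerivAt_id s).smul_const (l ^ (k + 1) • c)).const_add (Q l)
        have hB : HasDerivAt (fun s' => fderiv ℝ F (t₀ + l, Q l + s' • (l ^ (k + 1) • c)))
            (fderiv ℝ (fderiv ℝ F) (t₀ + l, Q l + s • (l ^ (k + 1) • c))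
              ((0:ℝ), l ^ (k + 1) • c)) s :=
          (hF1d _).hasFDerivAt.comp_hasDerivAt s hγ
        have h4 := (hB.clm_apply
          (hasDerivAt_const s ((((1:ℝ), R l)) : ℝ × (Fin m → ℝ)))).deriv
        rw [h4]
        have hv : (((0:ℝ), l ^ (k + 1) • c) : ℝ × (Fin m → ℝ))
            = l ^ (k + 1) • (((0:ℝ), c) : ℝ × (Fin m → ℝ)) := by
          simp [Prod.smul_mk]
        rw [hv, map_smul]
        simp only [map_zero, add_zero, ContinuousLinearMap.smul_apply, smul_eq_mul]
      have hconst := iteratedDeriv_param_const hG₃ hφ₃ (Nat.lt_succ_self k) hH 1 0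
      calc iteratedDeriv k (fun l => fderiv ℝ F
            (t₀ + l, fun j => ∑ i ∈ Finset.range (k + 1 + 1), Y j i * l ^ i) ((1:ℝ), R l)) 0
          = iteratedDeriv k (fun l => fderiv ℝ F
              (t₀ + l, Q l + (1:ℝ) • (l ^ (k + 1) • c)) ((1:ℝ), R l)) 0 := by
            congr 1
            funext l
            have hP : (fun j => ∑ i ∈ Finset.range (k + 1 + 1), Y j i * l ^ i)
                = Q l + (1:ℝ) • ((l ^ (k + 1) • c : Fin m → ℝ)) := by
              funext j
              rw [Finset.sum_range_succ]
              simp only [hQdef, hcdef, one_smul, Pi.add_apply, Pi.smul_apply, smul_eq_mul]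
              ring
            rw [hP]
        _ = iteratedDeriv k (fun l => fderiv ℝ F
              (t₀ + l, Q l + (0:ℝ) • (l ^ (k + 1) • c)) ((1:ℝ), R l)) 0 := hconst
        _ = iteratedDeriv k (fun l => fderiv ℝ F (t₀ + l, Q l) ((1:ℝ), R l)) 0 := by
            congr 1
            funext l
            rw [zero_smul, add_zero]
    ----------------------------------------------------------------
    -- Final assembly
    ----------------------------------------------------------------
    have hcast : ((k + 1 : ℕ) : ℝ) = (k : ℝ) + 1 := by push_cast; ring
    rw [hT1, hRHSsum, hcast, hLHS, hPQ, hW]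
    ring
  · intro t₀ Y
    simp [diffTransformMulti]
end

section
/- Let f : ℝ → ℝ be infinitely differentiable, let t₀ ∈ ℝ, and let y : ℝ → ℝ admit a formal power series p at t₀ on a ball of radius r > 0, with coefficients Y(i). Then for every n ∈ ℕ, the differential transform of f ∘ y at t₀ satisfies F(n) = (1/n!) · dⁿ/dλⁿ [ f(∑_{i=0}^∞ Y(i)·λ^i) ] evaluated at λ = 0; that is, (1/n!)·iteratedDeriv n (f ∘ y) t₀ = (1/n!)·iteratedDeriv n (λ ↦ f(∑_{i=0}^∞ Y(i)·λ^i)) 0. -/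
/-- The autonomous special case of Theorem 1 of the paper: the differential
transform `F(n)` of `f ∘ y` at `t₀` equals
`(1/n!) · dⁿ/dλⁿ [f(∑ᵢ Y(i) λ^i)]` at `λ = 0`, where `Y(i)` are the power-series
coefficients of `y` at `t₀`. -/
theorem differential_transform_autonomous
    (f : ℝ → ℝ) (hf : ContDiff ℝ (⊤ : ℕ∞) f)
    (t₀ : ℝ) (y : ℝ → ℝ) (p : FormalMultilinearSeries ℝ ℝ ℝ)
    (r : ENNReal) (hr : 0 < r) (hy : HasFPowerSeriesOnBall y p t₀ r)
    (n : ℕ) :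
    (1 / (n.factorial : ℝ)) * iteratedDeriv n (f ∘ y) t₀ =
      (1 / (n.factorial : ℝ)) *
        iteratedDeriv n (fun l => f (∑' i : ℕ, p.coeff i * l ^ i)) 0 := by
  congr 1
  have hs : ∀ᶠ z in nhds (0 : ℝ), HasSum (fun n => z ^ n • p.coeff n) (y (t₀ + z)) :=
    (hasFPowerSeriesAt_iff.mp hy.hasFPowerSeriesAt)
  have heq : (fun l => f (∑' i : ℕ, p.coeff i * l ^ i)) =ᶠ[nhds (0:ℝ)]
      (fun l => (f ∘ y) (t₀ + l)) := by
    filter_upwards [hs] with z hz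
    have : (∑' i : ℕ, p.coeff i * z ^ i) = y (t₀ + z) := by
      rw [← hz.tsum_eq]
      exact tsum_congr fun i => by rw [smul_eq_mul, mul_comm]
    simp [this, Function.comp]
  rw [heq.iteratedDeriv_eq, iteratedDeriv_comp_const_add]
  simp
end

section
/- Let f : ℝ → ℝ be infinitely differentiable. For n ∈ ℕ and Y : ℕ → ℝ define F(n)(Y) = (1/n!) · dⁿ/dλⁿ [ f(∑_{i=0}^{n} Y(i)·λ^i) ] evaluated at λ = 0. Then for every n ≥ 1 and every Y, n · F(n)(Y) = ∑_{k=0}^{n−1} (k+1)·Y(k+1) · ∂F(n−1)/∂Y(k) (Y), where ∂F(n−1)/∂Y(k) denotes the derivative of s ↦ F(n−1)(Function.update Y k s) at s = Y(k). Moreover F(0)(Y) = f(Y(0)). -/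
open scoped ContDiff

private lemma le_infty' (n : ℕ∞) : (n : WithTop ℕ∞) ≤ ∞ := by exact_mod_cast le_top

private lemma hd1 (F : ℝ × ℝ → ℝ) (hF : ContDiff ℝ ∞ F) (s l : ℝ) :
    HasDerivAt (fun s' => F (s', l)) (fderiv ℝ F (s, l) (1, 0)) s := by
  have h := (hF.differentiable (by simp) (s, l)).hasFDerivAt
  have hc : HasDerivAt (fun s' : ℝ => (s', l)) ((1 : ℝ), (0 : ℝ)) s :=
    (hasDerivAt_id s).prodMk (hasDerivAt_const s l)
  exact h.comp_hasDerivAt s hc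

private lemma hd2 (F : ℝ × ℝ → ℝ) (hF : ContDiff ℝ ∞ F) (s l : ℝ) :
    HasDerivAt (fun l' => F (s, l')) (fderiv ℝ F (s, l) (0, 1)) l := by
  have h := (hF.differentiable (by simp) (s, l)).hasFDerivAt
  have hc : HasDerivAt (fun l' : ℝ => (s, l')) ((0 : ℝ), (1 : ℝ)) l :=
    (hasDerivAt_const l s).prodMk (hasDerivAt_id l)
  exact h.comp_hasDerivAt l hc

private lemma mixed1 (F : ℝ × ℝ → ℝ) (hF : ContDiff ℝ ∞ F) (s l : ℝ) :
    HasDerivAt (fun l' => deriv (fun s' => F (s', l')) s)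
      (fderiv ℝ (fderiv ℝ F) (s, l) (0, 1) (1, 0)) l := by
  have hφ : ContDiff ℝ ∞ (fderiv ℝ F) := hF.fderiv_right (by norm_num)
  have h2 : HasFDerivAt (fderiv ℝ F) (fderiv ℝ (fderiv ℝ F) (s, l)) (s, l) :=
    (hφ.differentiable (by simp) (s, l)).hasFDerivAt
  have hc : HasDerivAt (fun l' : ℝ => (s, l')) ((0 : ℝ), (1 : ℝ)) l :=
    (hasDerivAt_const l s).prodMk (hasDerivAt_id l)
  have h3 : HasDerivAt (fun l' => fderiv ℝ F (s, l'))
      (fderiv ℝ (fderiv ℝ F) (s, l) (0, 1)) l := h2.comp_hasDerivAt l hc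
  have h4 := ((ContinuousLinearMap.apply ℝ ℝ ((1 : ℝ), (0 : ℝ))).hasFDerivAt).comp_hasDerivAt l h3
  simp only [ContinuousLinearMap.apply_apply] at h4
  have heq : (fun l' => deriv (fun s' => F (s', l')) s)
      = fun l' => fderiv ℝ F (s, l') (1, 0) := by
    funext l'
    exact (hd1 F hF s l').deriv
  rw [heq]
  exact h4

private lemma mixed2 (F : ℝ × ℝ → ℝ) (hF : ContDiff ℝ ∞ F) (s l : ℝ) :
    HasDerivAt (fun s' => deriv (fun l' => F (s', l')) l)
      (fderiv ℝ (fderiv ℝ F) (s, l) (1, 0) (0, 1)) s := by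
  have hφ : ContDiff ℝ ∞ (fderiv ℝ F) := hF.fderiv_right (by norm_num)
  have h2 : HasFDerivAt (fderiv ℝ F) (fderiv ℝ (fderiv ℝ F) (s, l)) (s, l) :=
    (hφ.differentiable (by simp) (s, l)).hasFDerivAt
  have hc : HasDerivAt (fun s' : ℝ => (s', l)) ((1 : ℝ), (0 : ℝ)) s :=
    (hasDerivAt_id s).prodMk (hasDerivAt_const s l)
  have h3 : HasDerivAt (fun s' => fderiv ℝ F (s', l))
      (fderiv ℝ (fderiv ℝ F) (s, l) (1, 0)) s := h2.comp_hasDerivAt s hc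
  have h4 := ((ContinuousLinearMap.apply ℝ ℝ ((0 : ℝ), (1 : ℝ))).hasFDerivAt).comp_hasDerivAt s h3
  simp only [ContinuousLinearMap.apply_apply] at h4
  have heq : (fun s' => deriv (fun l' => F (s', l')) l)
      = fun s' => fderiv ℝ F (s', l) (0, 1) := by
    funext s'
    exact (hd2 F hF s' l).deriv
  rw [heq]
  exact h4

private lemma clairaut_s5 (F : ℝ × ℝ → ℝ) (hF : ContDiff ℝ ∞ F) (s l : ℝ) :
    deriv (fun l' => deriv (fun s' => F (s', l')) s) l
      = deriv (fun s' => deriv (fun l' => F (s', l')) l) s := by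
  rw [(mixed1 F hF s l).deriv, (mixed2 F hF s l).deriv]
  exact (hF.contDiffAt.isSymmSndFDerivAt (by rw [minSmoothness_of_isRCLikeNormedField]; exact le_infty' 2)) _ _

private lemma swap_lemma (m : ℕ) :
    ∀ (F : ℝ × ℝ → ℝ), ContDiff ℝ ∞ F → ∀ s : ℝ,
      HasDerivAt (fun s' => iteratedDeriv m (fun l => F (s', l)) 0)
        (iteratedDeriv m (fun l => deriv (fun s' => F (s', l)) s) 0) s := by
  induction m with
  | zero =>
    intro F hF s
    simp only [iteratedDeriv_zero]
    have h := hd1 F hF s 0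
    rwa [← h.deriv] at h
  | succ m IH =>
    intro F hF s
    set F₂ : ℝ × ℝ → ℝ := fun p => fderiv ℝ F p (0, 1) with hF₂def
    have hF₂ : ContDiff ℝ ∞ F₂ :=
      (hF.fderiv_right (by norm_num)).clm_apply contDiff_const
    have key : ∀ s' l, deriv (fun l' => F (s', l')) l = F₂ (s', l) :=
      fun s' l => (hd2 F hF s' l).deriv
    have IH' := IH F₂ hF₂ s
    have e1 : (fun s' => iteratedDeriv (m + 1) (fun l => F (s', l)) 0)
        = fun s' => iteratedDeriv m (fun l => F₂ (s', l)) 0 := by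
      funext s'
      rw [iteratedDeriv_succ']
      congr 1
      funext l
      exact key s' l
    have e2 : iteratedDeriv (m + 1) (fun l => deriv (fun s' => F (s', l)) s) 0
        = iteratedDeriv m (fun l => deriv (fun s' => F₂ (s', l)) s) 0 := by
      rw [iteratedDeriv_succ']
      congr 1
      funext l
      rw [clairaut_s5 F hF s l]
      congr 1
      funext s'
      exact key s' l
    rw [e1, e2]
    exact IH'

private lemma pow_kill (j : ℕ) :
    ∀ (p : ℕ), j < p → ∀ (r : ℝ → ℝ), ContDiff ℝ ∞ r →
      iteratedDeriv j (fun l : ℝ => l ^ p * r l) 0 = 0 := by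
  induction j with
  | zero =>
    intro p hp r _
    simp [iteratedDeriv_zero, zero_pow (by omega : p ≠ 0)]
  | succ j IH =>
    intro p hp r hr
    obtain ⟨q, rfl⟩ : ∃ q, p = q + 1 := ⟨p - 1, by omega⟩
    rw [iteratedDeriv_succ']
    have hder : deriv (fun l : ℝ => l ^ (q + 1) * r l)
        = fun l => l ^ q * (((q : ℝ) + 1) * r l + l * deriv r l) := by
      funext l
      have h1 : HasDerivAt (fun l : ℝ => l ^ (q + 1)) (((q : ℝ) + 1) * l ^ q) l := by
        simpa using hasDerivAt_pow (q + 1) l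
      have h2 : HasDerivAt r (deriv r l) l :=
        (hr.differentiable (by simp) l).hasDerivAt
      rw [(h1.fun_mul h2).deriv]
      ring
    rw [hder]
    exact IH q (by omega) _
      ((contDiff_const.mul hr).add
        (contDiff_id.mul (contDiff_infty_iff_deriv.mp hr).2))

private lemma itd_add (m : ℕ) (f g : ℝ → ℝ) (x : ℝ)
    (hf : ContDiff ℝ ∞ f) (hg : ContDiff ℝ ∞ g) :
    iteratedDeriv m (fun l => f l + g l) x = iteratedDeriv m f x + iteratedDeriv m g x := by
  simp only [iteratedDeriv_eq_iteratedFDeriv]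
  rw [show (fun l => f l + g l) = f + g from rfl,
    iteratedFDeriv_add_apply (hf.of_le (le_infty' m)).contDiffAt (hg.of_le (le_infty' m)).contDiffAt]
  rfl

private lemma itd_cmul (m : ℕ) (c : ℝ) (f : ℝ → ℝ) (x : ℝ) (hf : ContDiff ℝ ∞ f) :
    iteratedDeriv m (fun l => c * f l) x = c * iteratedDeriv m f x := by
  simp only [iteratedDeriv_eq_iteratedFDeriv]
  rw [show (fun l => c * f l) = c • f from rfl,
    iteratedFDeriv_const_smul_apply (hf.of_le (le_infty' m)).contDiffAt]
  rfl

private lemma itd_sum (m : ℕ) (s : Finset ℕ) (c : ℕ → ℝ) (h : ℕ → ℝ → ℝ) (x : ℝ)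
    (hh : ∀ i, ContDiff ℝ ∞ (h i)) :
    iteratedDeriv m (fun l => ∑ i ∈ s, c i * h i l) x
      = ∑ i ∈ s, c i * iteratedDeriv m (h i) x := by
  classical
  induction s using Finset.induction with
  | empty => simp [iteratedDeriv_eq_iteratedFDeriv]
  | insert _ _ hi ih =>
    rename_i a s'
    simp only [Finset.sum_insert hi]
    rw [itd_add m _ _ x (contDiff_const.mul (hh a))
        (ContDiff.sum fun i _ => contDiff_const.mul (hh i)),
      itd_cmul m _ _ x (hh a), ih]

/-- Truncation: changing the inner function by `c * l^(m+1)` does not affect the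
`m`-th derivative at `0`. -/
private lemma trunc (g T Q : ℝ → ℝ) (hg : ContDiff ℝ ∞ g)
    (hT : ContDiff ℝ ∞ T) (hQ : ContDiff ℝ ∞ Q) (m : ℕ) (c : ℝ) :
    iteratedDeriv m (fun l => g (T l + c * l ^ (m + 1)) * Q l) 0
      = iteratedDeriv m (fun l => g (T l) * Q l) 0 := by
  have hg' : ContDiff ℝ ∞ (deriv g) := (contDiff_infty_iff_deriv.mp hg).2
  set Φ : ℝ → ℝ :=
    fun t => iteratedDeriv m (fun l => g (T l + t * l ^ (m + 1)) * Q l) 0 with hΦdef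
  have hG : ContDiff ℝ ∞ (fun p : ℝ × ℝ => g (T p.2 + p.1 * p.2 ^ (m + 1)) * Q p.2) :=
    (hg.comp ((hT.comp contDiff_snd).add (contDiff_fst.mul (contDiff_snd.pow (m + 1))))).mul
      (hQ.comp contDiff_snd)
  have hΦ : ∀ t, HasDerivAt Φ 0 t := by
    intro t
    have h := swap_lemma m (fun p : ℝ × ℝ => g (T p.2 + p.1 * p.2 ^ (m + 1)) * Q p.2) hG t
    have e : iteratedDeriv m
        (fun l => deriv (fun t' => g (T l + t' * l ^ (m + 1)) * Q l) t) 0 = 0 := by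
      have heq : (fun l => deriv (fun t' => g (T l + t' * l ^ (m + 1)) * Q l) t)
          = fun l => l ^ (m + 1) * (deriv g (T l + t * l ^ (m + 1)) * Q l) := by
        funext l
        have h1 : HasDerivAt (fun t' : ℝ => T l + t' * l ^ (m + 1)) (l ^ (m + 1)) t :=
          (hasDerivAt_mul_const (l ^ (m + 1))).const_add (T l)
        have h2 := ((hg.differentiable (by simp) _).hasDerivAt).comp t h1
        simp only [Function.comp_def] at h2
        rw [(h2.mul_const (Q l)).deriv]
        ring
      rw [heq]
      exact pow_kill m (m + 1) (lt_add_one m) _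
        ((hg'.comp (hT.add (contDiff_const.mul (contDiff_id.pow (m + 1))))).mul hQ)
    rw [e] at h
    exact h
  have hconst : Φ c = Φ 0 :=
    is_const_of_deriv_eq_zero (fun t => (hΦ t).differentiableAt)
      (fun t => (hΦ t).deriv) c 0
  have h0 : Φ 0 = iteratedDeriv m (fun l => g (T l) * Q l) 0 := by
    simp only [hΦdef, zero_mul, add_zero]
  rw [← h0, ← hconst]

/-- The partial derivative of the coefficient functional with respect to `Y k`. -/
private lemma deriv_coeff (f : ℝ → ℝ) (hf' : ContDiff ℝ ∞ f) (Y : ℕ → ℝ) (m k : ℕ)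
    (hk : k < m + 1) :
    deriv (fun s => iteratedDeriv m
        (fun l => f (∑ i ∈ Finset.range (m + 1), Function.update Y k s i * l ^ i)) 0) (Y k)
      = iteratedDeriv m
          (fun l => deriv f (∑ i ∈ Finset.range (m + 1), Y i * l ^ i) * l ^ k) 0 := by
  classical
  have hG : ContDiff ℝ ∞
      (fun p : ℝ × ℝ => f (∑ i ∈ Finset.range (m + 1), Function.update Y k p.1 i * p.2 ^ i)) := by
    apply hf'.comp
    apply ContDiff.sum
    intro i _
    by_cases hik : i = k
    · subst hik
      simp only [Function.update_self]
      exact contDiff_fst.mul (contDiff_snd.pow i)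
    · simp only [Function.update_of_ne hik]
      exact contDiff_const.mul (contDiff_snd.pow i)
  have h := (swap_lemma m
    (fun p : ℝ × ℝ => f (∑ i ∈ Finset.range (m + 1), Function.update Y k p.1 i * p.2 ^ i))
    hG (Y k)).deriv
  rw [h]
  congr 1
  funext l
  have hsum : HasDerivAt
      (fun s => ∑ i ∈ Finset.range (m + 1), Function.update Y k s i * l ^ i) (l ^ k) (Y k) := by
    have hterms : ∀ i ∈ Finset.range (m + 1),
        HasDerivAt (fun s => Function.update Y k s i * l ^ i)
          (if i = k then l ^ k else 0) (Y k) := by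
      intro i _
      by_cases hik : i = k
      · rw [hik]
        simp only [if_pos rfl]
        have heq : (fun s => Function.update Y k s k * l ^ k) = fun s => s * l ^ k := by
          funext s
          rw [Function.update_self]
        rw [heq]
        exact hasDerivAt_mul_const _
      · simp only [if_neg hik]
        have heq : (fun s => Function.update Y k s i * l ^ i) = fun _ => Y i * l ^ i := by
          funext s
          rw [Function.update_of_ne hik]
        rw [heq]
        exact hasDerivAt_const _ _
    have h := HasDerivAt.fun_sum hterms
    simpa [Finset.sum_ite_eq' (Finset.range (m + 1)) k, Finset.mem_range.mpr hk] using h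
  have h2 := ((hf'.differentiable (by simp) _).hasDerivAt).comp (Y k) hsum
  simp only [Function.comp_def] at h2
  rw [h2.deriv]
  congr 2
  simp [Function.update_eq_self]

/-- The autonomous differential transform `F(n)(Y)` of
`λ ↦ f(∑_{i=0}^{n} Y(i) λ^i)` at `λ = 0`. -/
noncomputable def diffTransformAut (f : ℝ → ℝ) (n : ℕ) (Y : ℕ → ℝ) : ℝ :=
  (1 / (n.factorial : ℝ)) *
    iteratedDeriv n (fun l => f (∑ i ∈ Finset.range (n + 1), Y i * l ^ i)) 0

/-- The autonomous special case of Theorem 2 of the paper: the recurrence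
`n · F(n) = ∑_{k=0}^{n−1} (k+1) Y(k+1) ∂F(n−1)/∂Y(k)` together with
`F(0)(Y) = f(Y(0))`. -/
theorem differential_transform_recurrence_autonomous
    (f : ℝ → ℝ) (hf : ContDiff ℝ (⊤ : ℕ∞) f) :
    (∀ n : ℕ, 1 ≤ n → ∀ Y : ℕ → ℝ,
      (n : ℝ) * diffTransformAut f n Y =
        ∑ k ∈ Finset.range n, ((k : ℝ) + 1) * Y (k + 1) *
          deriv (fun s => diffTransformAut f (n - 1) (Function.update Y k s)) (Y k)) ∧
    (∀ Y : ℕ → ℝ, diffTransformAut f 0 Y = f (Y 0)) := by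
  have hf' : ContDiff ℝ ∞ f := hf.of_le (by simp)
  have hf'' : ContDiff ℝ ∞ (deriv f) := (contDiff_infty_iff_deriv.mp hf').2
  constructor
  · intro n hn Y
    obtain ⟨m, rfl⟩ : ∃ m, n = m + 1 := ⟨n - 1, by omega⟩
    simp only [Nat.add_sub_cancel]
    have hTsm : ContDiff ℝ ∞ (fun l : ℝ => ∑ i ∈ Finset.range (m + 1), Y i * l ^ i) :=
      ContDiff.sum fun i _ => contDiff_const.mul (contDiff_id.pow i)
    have hQsm : ContDiff ℝ ∞
        (fun l : ℝ => ∑ k ∈ Finset.range (m + 1), ((k : ℝ) + 1) * Y (k + 1) * l ^ k) :=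
      ContDiff.sum fun i _ => contDiff_const.mul (contDiff_id.pow i)
    -- derivative of the inner polynomial of degree m+1
    have hS'der : ∀ l : ℝ, HasDerivAt (fun l' => ∑ i ∈ Finset.range (m + 2), Y i * l' ^ i)
        (∑ k ∈ Finset.range (m + 1), ((k : ℝ) + 1) * Y (k + 1) * l ^ k) l := by
      intro l
      have h := HasDerivAt.fun_sum (u := Finset.range (m + 2))
        (A := fun i l' => Y i * l' ^ i)
        (A' := fun i => Y i * ((i : ℝ) * l ^ (i - 1)))
        (fun i _ => (hasDerivAt_pow i l).const_mul (Y i))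
      refine h.congr_deriv ?_
      rw [Finset.sum_range_succ' (fun i => Y i * ((i : ℝ) * l ^ (i - 1))) (m + 1)]
      simp only [Nat.cast_zero, zero_mul, mul_zero, add_zero, Nat.add_sub_cancel]
      apply Finset.sum_congr rfl
      intro k _
      push_cast
      ring
    -- LHS reduction
    have hL1 : iteratedDeriv (m + 1)
        (fun l => f (∑ i ∈ Finset.range (m + 1 + 1), Y i * l ^ i)) 0
        = iteratedDeriv m (fun l => deriv f (∑ i ∈ Finset.range (m + 2), Y i * l ^ i) *
            (∑ k ∈ Finset.range (m + 1), ((k : ℝ) + 1) * Y (k + 1) * l ^ k)) 0 := by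
      rw [iteratedDeriv_succ']
      congr 1
      funext l
      have h := ((hf'.differentiable (by simp) _).hasDerivAt).comp l (hS'der l)
      simp only [Function.comp_def] at h
      exact h.deriv
    have hL2 : iteratedDeriv m (fun l => deriv f (∑ i ∈ Finset.range (m + 2), Y i * l ^ i) *
            (∑ k ∈ Finset.range (m + 1), ((k : ℝ) + 1) * Y (k + 1) * l ^ k)) 0
        = iteratedDeriv m (fun l => deriv f (∑ i ∈ Finset.range (m + 1), Y i * l ^ i) *
            (∑ k ∈ Finset.range (m + 1), ((k : ℝ) + 1) * Y (k + 1) * l ^ k)) 0 := by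
      have hsplit : (fun l : ℝ => deriv f (∑ i ∈ Finset.range (m + 2), Y i * l ^ i) *
            (∑ k ∈ Finset.range (m + 1), ((k : ℝ) + 1) * Y (k + 1) * l ^ k))
          = fun l : ℝ => deriv f ((∑ i ∈ Finset.range (m + 1), Y i * l ^ i)
              + Y (m + 1) * l ^ (m + 1)) *
            (∑ k ∈ Finset.range (m + 1), ((k : ℝ) + 1) * Y (k + 1) * l ^ k) := by
        funext l
        rw [Finset.sum_range_succ]
      rw [hsplit]
      exact trunc (deriv f) _ _ hf'' hTsm hQsm m (Y (m + 1))
    -- RHS reduction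
    have hR : ∀ k ∈ Finset.range (m + 1),
        deriv (fun s => diffTransformAut f m (Function.update Y k s)) (Y k)
          = 1 / (m.factorial : ℝ) *
            iteratedDeriv m
              (fun l => deriv f (∑ i ∈ Finset.range (m + 1), Y i * l ^ i) * l ^ k) 0 := by
      intro k hk
      have heq : (fun s => diffTransformAut f m (Function.update Y k s))
          = fun s => 1 / (m.factorial : ℝ) * iteratedDeriv m
              (fun l => f (∑ i ∈ Finset.range (m + 1), Function.update Y k s i * l ^ i)) 0 :=
        rfl
      rw [heq, deriv_const_mul_field, deriv_coeff f hf' Y m k (Finset.mem_range.mp hk)]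
    rw [Finset.sum_congr rfl (fun k hk => by rw [hR k hk])]
    -- pull out the factor 1/m! and use linearity
    have hsum : ∑ k ∈ Finset.range (m + 1), ((k : ℝ) + 1) * Y (k + 1) *
          (1 / (m.factorial : ℝ) * iteratedDeriv m
            (fun l => deriv f (∑ i ∈ Finset.range (m + 1), Y i * l ^ i) * l ^ k) 0)
        = 1 / (m.factorial : ℝ) * ∑ k ∈ Finset.range (m + 1),
            (((k : ℝ) + 1) * Y (k + 1)) * iteratedDeriv m
              (fun l => deriv f (∑ i ∈ Finset.range (m + 1), Y i * l ^ i) * l ^ k) 0 := by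
      rw [Finset.mul_sum]
      apply Finset.sum_congr rfl
      intro k _
      ring
    rw [hsum]
    have hlin : ∑ k ∈ Finset.range (m + 1),
          (((k : ℝ) + 1) * Y (k + 1)) * iteratedDeriv m
            (fun l => deriv f (∑ i ∈ Finset.range (m + 1), Y i * l ^ i) * l ^ k) 0
        = iteratedDeriv m (fun l => ∑ k ∈ Finset.range (m + 1),
            (((k : ℝ) + 1) * Y (k + 1)) *
              (deriv f (∑ i ∈ Finset.range (m + 1), Y i * l ^ i) * l ^ k)) 0 := by
      rw [itd_sum m (Finset.range (m + 1)) (fun k => ((k : ℝ) + 1) * Y (k + 1))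
        (fun k l => deriv f (∑ i ∈ Finset.range (m + 1), Y i * l ^ i) * l ^ k) 0
        (fun k => (hf''.comp hTsm).mul (contDiff_id.pow k))]
    rw [hlin]
    have hfac : (fun l : ℝ => ∑ k ∈ Finset.range (m + 1),
          (((k : ℝ) + 1) * Y (k + 1)) *
            (deriv f (∑ i ∈ Finset.range (m + 1), Y i * l ^ i) * l ^ k))
        = fun l : ℝ => deriv f (∑ i ∈ Finset.range (m + 1), Y i * l ^ i) *
            (∑ k ∈ Finset.range (m + 1), ((k : ℝ) + 1) * Y (k + 1) * l ^ k) := by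
      funext l
      rw [Finset.mul_sum]
      apply Finset.sum_congr rfl
      intro k _
      ring
    rw [hfac]
    -- now both sides are multiples of the same iterated derivative
    show ((m + 1 : ℕ) : ℝ) * ((1 / ((m + 1).factorial : ℝ)) * _) = _
    rw [hL1, hL2]
    have hfact : (((m + 1).factorial : ℝ)) = ((m + 1 : ℕ) : ℝ) * (m.factorial : ℝ) := by
      rw [Nat.factorial_succ]
      push_cast
      ring
    rw [hfact]
    have hm1 : ((m + 1 : ℕ) : ℝ) ≠ 0 := by positivity
    have hmf : (m.factorial : ℝ) ≠ 0 := by positivity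
    field_simp
  · intro Y
    simp [diffTransformAut]
end

section
/- Let m ∈ ℕ and let f : (Fin m → ℝ) → ℝ be infinitely differentiable. For n ∈ ℕ and Y : Fin m → ℕ → ℝ define F(n)(Y) = (1/n!) · dⁿ/dλⁿ [ f((∑_{i=0}^{n} Y_j(i)·λ^i)_j) ] evaluated at λ = 0. Then for every n ≥ 1 and every Y, n · F(n)(Y) = ∑_{j=1}^{m} ∑_{k=0}^{n−1} (k+1)·Y_j(k+1) · ∂F(n−1)/∂Y_j(k) (Y), where ∂F(n−1)/∂Y_j(k) denotes the derivative of s ↦ F(n−1)(Y with the (j,k)-entry replaced by s) at s = Y_j(k). Moreover F(0)(Y) = f((Y_j(0))_j). -/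
open Finset

section AuxDiffTransform

lemma aux_contDiff_deriv (w : ℝ → ℝ) (hw : ContDiff ℝ (⊤ : ℕ∞) w) : ContDiff ℝ (⊤ : ℕ∞) (deriv w) := by
  have h := (hw.fderiv_right (m := (⊤ : ℕ∞)) (by simp)).clm_apply (contDiff_const (c := (1:ℝ)))
  have he : (fun x => fderiv ℝ w x 1) = deriv w := funext fun x => fderiv_apply_one_eq_deriv
  rwa [he] at h

lemma aux_contDiff_deriv2 (H : ℝ → ℝ → ℝ) (hH : ContDiff ℝ (⊤ : ℕ∞) (Function.uncurry H)) :
    ContDiff ℝ (⊤ : ℕ∞) (Function.uncurry fun x y => deriv (H x) y) := by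
  have h1 : ContDiff ℝ (⊤ : ℕ∞) (fun p : ℝ × ℝ => fderiv ℝ (H p.1) p.2) := by
    apply ContDiff.fderiv (f := fun (p : ℝ × ℝ) (y : ℝ) => H p.1 y) (g := fun p : ℝ × ℝ => p.2)
      (m := ((⊤ : ℕ∞) : WithTop ℕ∞)) (hnm := by simp)
    · exact hH.comp ((contDiff_fst.fst).prodMk contDiff_snd)
    · exact contDiff_snd
  have h2 := h1.clm_apply (contDiff_const (c := (1:ℝ)))
  have he : (fun p : ℝ × ℝ => fderiv ℝ (H p.1) p.2 1)
      = Function.uncurry fun x y => deriv (H x) y := funext fun p => fderiv_apply_one_eq_deriv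
  rwa [he] at h2

lemma aux_contDiff_iteratedDeriv (H : ℝ → ℝ → ℝ) (hH : ContDiff ℝ (⊤ : ℕ∞) (Function.uncurry H))
    (n : ℕ) : ContDiff ℝ (⊤ : ℕ∞) (fun p : ℝ × ℝ => iteratedDeriv n (H p.1) p.2) := by
  induction n generalizing H with
  | zero => simp only [iteratedDeriv_zero]; exact hH
  | succ n ih =>
    have h1 := aux_contDiff_deriv2 H hH
    have h2 := ih _ h1
    simpa [iteratedDeriv_succ'] using h2

lemma aux_clairaut (H : ℝ → ℝ → ℝ) (hH : ContDiff ℝ (⊤ : ℕ∞) (Function.uncurry H)) (s l : ℝ) :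
    deriv (fun x => deriv (H x) l) s = deriv (fun y => deriv (fun x => H x y) s) l := by
  set F : ℝ × ℝ → ℝ := Function.uncurry H with hF
  have hFd : Differentiable ℝ F := hH.differentiable (by simp)
  have hD : ContDiff ℝ (⊤ : ℕ∞) (fderiv ℝ F) := hH.fderiv_right (m := (⊤ : ℕ∞)) (by simp)
  have hDd : Differentiable ℝ (fderiv ℝ F) := hD.differentiable (by simp)
  -- slice derivatives as directional derivatives
  have hA : ∀ a b : ℝ, deriv (H a) b = fderiv ℝ F (a, b) (0, 1) := by
    intro a b
    have hc : HasDerivAt (fun y : ℝ => (a, y)) ((0 : ℝ), (1 : ℝ)) b :=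
      (hasDerivAt_const b a).prodMk (hasDerivAt_id b)
    have := (hFd (a, b)).hasFDerivAt.comp_hasDerivAt b hc
    exact this.deriv
  have hB : ∀ a b : ℝ, deriv (fun x => H x b) a = fderiv ℝ F (a, b) (1, 0) := by
    intro a b
    have hc : HasDerivAt (fun x : ℝ => (x, b)) ((1 : ℝ), (0 : ℝ)) a :=
      (hasDerivAt_id a).prodMk (hasDerivAt_const a b)
    have := (hFd (a, b)).hasFDerivAt.comp_hasDerivAt a hc
    exact this.deriv
  -- mixed second derivatives
  have hmix : ∀ (a b : ℝ) (v w : ℝ × ℝ),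
      deriv (fun x : ℝ => fderiv ℝ F (x, b) v) a = fderiv ℝ (fderiv ℝ F) (a, b) (1, 0) v := by
    intro a b v w
    have hc : HasDerivAt (fun x : ℝ => (x, b)) ((1 : ℝ), (0 : ℝ)) a :=
      (hasDerivAt_id a).prodMk (hasDerivAt_const a b)
    have h1 : HasDerivAt (fun x : ℝ => fderiv ℝ F (x, b))
        (fderiv ℝ (fderiv ℝ F) (a, b) (1, 0)) a :=
      (hDd (a, b)).hasFDerivAt.comp_hasDerivAt a hc
    have h2 := (ContinuousLinearMap.apply ℝ ℝ v).hasFDerivAt.comp_hasDerivAt a h1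
    exact h2.deriv
  have hmix2 : ∀ (a b : ℝ) (v : ℝ × ℝ),
      deriv (fun y : ℝ => fderiv ℝ F (a, y) v) b = fderiv ℝ (fderiv ℝ F) (a, b) (0, 1) v := by
    intro a b v
    have hc : HasDerivAt (fun y : ℝ => (a, y)) ((0 : ℝ), (1 : ℝ)) b :=
      (hasDerivAt_const b a).prodMk (hasDerivAt_id b)
    have h1 : HasDerivAt (fun y : ℝ => fderiv ℝ F (a, y))
        (fderiv ℝ (fderiv ℝ F) (a, b) (0, 1)) b :=
      (hDd (a, b)).hasFDerivAt.comp_hasDerivAt b hc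
    have h2 := (ContinuousLinearMap.apply ℝ ℝ v).hasFDerivAt.comp_hasDerivAt b h1
    exact h2.deriv
  have hsymm := second_derivative_symmetric (f := F) (f' := fderiv ℝ F)
      (f'' := fderiv ℝ (fderiv ℝ F) (s, l)) (x := (s, l))
      (fun y => (hFd y).hasFDerivAt) ((hDd (s, l)).hasFDerivAt) (1, 0) (0, 1)
  calc deriv (fun x => deriv (H x) l) s
      = deriv (fun x : ℝ => fderiv ℝ F (x, l) (0, 1)) s := by
        congr 1; funext x; exact hA x l
    _ = fderiv ℝ (fderiv ℝ F) (s, l) (1, 0) (0, 1) := hmix s l (0, 1) (0, 1)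
    _ = fderiv ℝ (fderiv ℝ F) (s, l) (0, 1) (1, 0) := hsymm
    _ = deriv (fun y : ℝ => fderiv ℝ F (s, y) (1, 0)) l := (hmix2 s l (1, 0)).symm
    _ = deriv (fun y => deriv (fun x => H x y) s) l := by
        congr 1; funext y; exact (hB s y).symm

lemma aux_swap (H : ℝ → ℝ → ℝ) (hH : ContDiff ℝ (⊤ : ℕ∞) (Function.uncurry H)) (n : ℕ) (s l : ℝ) :
    deriv (fun x => iteratedDeriv n (H x) l) s
      = iteratedDeriv n (fun y => deriv (fun x => H x y) s) l := by
  induction n generalizing H l with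
  | zero => simp [iteratedDeriv_zero]
  | succ n ih =>
    have hH' := aux_contDiff_deriv2 H hH
    calc deriv (fun x => iteratedDeriv (n + 1) (H x) l) s
        = deriv (fun x => iteratedDeriv n (deriv (H x)) l) s := by
          simp only [iteratedDeriv_succ']
      _ = iteratedDeriv n (fun y => deriv (fun x => deriv (H x) y) s) l := ih _ hH' l
      _ = iteratedDeriv n (deriv (fun y => deriv (fun x => H x y) s)) l := by
          congr 1; funext y; exact aux_clairaut H hH s y
      _ = iteratedDeriv (n + 1) (fun y => deriv (fun x => H x y) s) l := by
          rw [iteratedDeriv_succ']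

lemma aux_vanish : ∀ (d nn : ℕ) (w : ℝ → ℝ), ContDiff ℝ (⊤ : ℕ∞) w → d < nn →
    iteratedDeriv d (fun l : ℝ => l ^ nn * w l) 0 = 0 := by
  intro d
  induction d with
  | zero =>
    intro nn w hw h
    simp [iteratedDeriv_zero, zero_pow (by omega : nn ≠ 0)]
  | succ d ih =>
    intro nn w hw h
    rw [iteratedDeriv_succ']
    have hd : deriv (fun l : ℝ => l ^ nn * w l)
        = fun l => l ^ (nn - 1) * ((nn : ℝ) * w l + l * deriv w l) := by
      funext l
      have h1 : HasDerivAt (fun l : ℝ => l ^ nn * w l)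
          (((nn : ℝ) * l ^ (nn - 1)) * w l + l ^ nn * deriv w l) l :=
        (hasDerivAt_pow nn l).mul ((hw.differentiable (by simp) l).hasDerivAt)
      rw [h1.deriv]
      have hp : l ^ nn = l ^ (nn - 1) * l := by
        conv_lhs => rw [show nn = (nn - 1) + 1 by omega]
        rw [pow_succ]
      rw [hp]; ring
    rw [hd]
    exact ih (nn - 1) _ ((contDiff_const.mul hw).add
      (contDiff_id.mul (aux_contDiff_deriv w hw))) (by omega)

lemma aux_iteratedDeriv_sum {ι : Type*} (u : Finset ι) :
    ∀ (g : ι → ℝ → ℝ), (∀ i ∈ u, ContDiff ℝ (⊤ : ℕ∞) (g i)) → ∀ (n : ℕ) (x : ℝ),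
    iteratedDeriv n (fun l => ∑ i ∈ u, g i l) x = ∑ i ∈ u, iteratedDeriv n (g i) x := by
  intro g hg n
  induction n generalizing g with
  | zero => intro x; simp [iteratedDeriv_zero]
  | succ n ih =>
    intro x
    rw [iteratedDeriv_succ']
    have hder : deriv (fun l => ∑ i ∈ u, g i l) = fun l => ∑ i ∈ u, deriv (g i) l := by
      funext l
      exact deriv_fun_sum fun i hi => ((hg i hi).differentiable (by simp)).differentiableAt
    rw [hder, ih _ (fun i hi => aux_contDiff_deriv _ (hg i hi))]
    simp only [iteratedDeriv_succ']

lemma aux_iteratedDeriv_const_mul (c : ℝ) (w : ℝ → ℝ) (hw : ContDiff ℝ (⊤ : ℕ∞) w) (n : ℕ) (x : ℝ) :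
    iteratedDeriv n (fun l => c * w l) x = c * iteratedDeriv n w x := by
  simp only [← iteratedDerivWithin_univ]
  exact iteratedDerivWithin_const_mul (Set.mem_univ x) uniqueDiffOn_univ c
    ((hw.of_le (by exact_mod_cast le_top)).contDiffWithinAt)

lemma aux_jet {m : ℕ} (B : (Fin m → ℝ) → ℝ) (hB : ContDiff ℝ (⊤ : ℕ∞) B)
    (q r : ℝ → Fin m → ℝ) (hq : ContDiff ℝ (⊤ : ℕ∞) q) (hr : ContDiff ℝ (⊤ : ℕ∞) r)
    (k d nn : ℕ) (hd : d < nn) :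
    iteratedDeriv d (fun l => l ^ k * B (q l + l ^ nn • r l)) 0
      = iteratedDeriv d (fun l => l ^ k * B (q l)) 0 := by
  set H : ℝ → ℝ → ℝ := fun t l => l ^ k * B (q l + (t * l ^ nn) • r l) with hHdef
  have hH : ContDiff ℝ (⊤ : ℕ∞) (Function.uncurry H) := by
    apply ContDiff.mul (contDiff_snd.pow k)
    exact hB.comp ((hq.comp contDiff_snd).add
      ((contDiff_fst.mul (contDiff_snd.pow nn)).smul (hr.comp contDiff_snd)))
  have hdiff : Differentiable ℝ (fun t => iteratedDeriv d (H t) 0) := by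
    have h1 := aux_contDiff_iteratedDeriv H hH d
    have h2 : ContDiff ℝ (⊤ : ℕ∞) (fun t : ℝ => iteratedDeriv d (H t) 0) :=
      h1.comp (contDiff_id.prodMk contDiff_const)
    exact h2.differentiable (by simp)
  have hderiv : ∀ t, deriv (fun t => iteratedDeriv d (H t) 0) t = 0 := by
    intro t
    rw [aux_swap H hH d t 0]
    have he : (fun y => deriv (fun x => H x y) t)
        = fun y : ℝ => y ^ (k + nn) *
            fderiv ℝ B (q y + (t * y ^ nn) • r y) (r y) := by
      funext y
      have hc : HasDerivAt (fun x : ℝ => q y + (x * y ^ nn) • r y) ((y ^ nn) • r y) t := by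
        have h0 : HasDerivAt (fun x : ℝ => x * y ^ nn) (y ^ nn) t := by
          simpa using (hasDerivAt_id t).mul_const (y ^ nn)
        exact (h0.smul_const (r y)).const_add (q y)
      have hB' := ((hB.differentiable (by simp)) (q y + (t * y ^ nn) • r y)).hasFDerivAt
      have hcomp : HasDerivAt (fun x : ℝ => B (q y + (x * y ^ nn) • r y))
          (fderiv ℝ B (q y + (t * y ^ nn) • r y) ((y ^ nn) • r y)) t :=
        hB'.comp_hasDerivAt t hc
      have hmul := hcomp.const_mul (y ^ k)
      have : deriv (fun x => H x y) t
          = y ^ k * fderiv ℝ B (q y + (t * y ^ nn) • r y) ((y ^ nn) • r y) := hmul.deriv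
      rw [this, map_smul, smul_eq_mul, pow_add]
      ring
    rw [he]
    have hw : ContDiff ℝ (⊤ : ℕ∞) (fun y : ℝ =>
        fderiv ℝ B (q y + (t * y ^ nn) • r y) (r y)) := by
      have hpt : ContDiff ℝ (⊤ : ℕ∞) (fun y : ℝ => q y + (t * y ^ nn) • r y) :=
        hq.add ((contDiff_const.mul (contDiff_id.pow nn)).smul hr)
      exact ((hB.fderiv_right (m := (⊤ : ℕ∞)) (by simp)).comp hpt).clm_apply hr
    exact aux_vanish d (k + nn) _ hw (by omega)
  have h10 := is_const_of_deriv_eq_zero hdiff hderiv 1 0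
  simpa only [hHdef, one_mul, zero_mul, zero_smul, add_zero] using h10

end AuxDiffTransform


/-- The multivariable autonomous differential transform `F(n)(Y)` of
`λ ↦ f((∑_{i=0}^{n} Y_j(i) λ^i)_j)` at `λ = 0`. -/
noncomputable def diffTransformAutMulti (m : ℕ) (f : (Fin m → ℝ) → ℝ)
    (n : ℕ) (Y : Fin m → ℕ → ℝ) : ℝ :=
  (1 / (n.factorial : ℝ)) *
    iteratedDeriv n
      (fun l => f (fun j => ∑ i ∈ Finset.range (n + 1), Y j i * l ^ i)) 0

/-- The multivariable autonomous special case of Corollary 2 of the paper: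
`n · F(n) = ∑_{j=1}^{m} ∑_{k=0}^{n−1} (k+1) Y_j(k+1) ∂F(n−1)/∂Y_j(k)` together with
`F(0)(Y) = f((Y_j(0))_j)`. -/
theorem differential_transform_recurrence_autonomous_multi
    (m : ℕ) (f : (Fin m → ℝ) → ℝ) (hf : ContDiff ℝ (⊤ : ℕ∞) f) :
    (∀ n : ℕ, 1 ≤ n → ∀ Y : Fin m → ℕ → ℝ,
      (n : ℝ) * diffTransformAutMulti m f n Y =
        ∑ j : Fin m, ∑ k ∈ Finset.range n, ((k : ℝ) + 1) * Y j (k + 1) *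
          deriv
            (fun s =>
              diffTransformAutMulti m f (n - 1)
                (Function.update Y j (Function.update (Y j) k s))) (Y j k)) ∧
    (∀ Y : Fin m → ℕ → ℝ, diffTransformAutMulti m f 0 Y = f (fun j => Y j 0)) := by
  constructor
  · intro n hn Y
    obtain ⟨d, rfl⟩ : ∃ d, n = d + 1 := ⟨n - 1, by omega⟩
    -- the directional derivatives of f
    set A : Fin m → (Fin m → ℝ) → ℝ := fun j x => fderiv ℝ f x (Pi.single j 1) with hAdef
    have hA : ∀ j, ContDiff ℝ (⊤ : ℕ∞) (A j) := fun j =>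
      (hf.fderiv_right (m := (⊤ : ℕ∞)) (by simp)).clm_apply contDiff_const
    -- the truncated polynomial curves
    have hq : ContDiff ℝ (⊤ : ℕ∞) (fun l : ℝ => fun j' : Fin m =>
        ∑ i ∈ Finset.range (d + 1), Y j' i * l ^ i) :=
      contDiff_pi.mpr fun j' => ContDiff.sum fun i _ => contDiff_const.mul (contDiff_id.pow i)
    have hexp : ∀ (x v : Fin m → ℝ), fderiv ℝ f x v = ∑ j, v j * A j x := by
      intro x v
      have hv : v = ∑ j, v j • (Pi.single j 1 : Fin m → ℝ) := by
        funext j'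
        simp [Finset.sum_apply, Pi.single_apply]
      conv_lhs => rw [hv]
      rw [map_sum]
      simp [hAdef]
    -- derivative of the full composite
    have hp' : ∀ l : ℝ, HasDerivAt (fun l : ℝ => (fun j' : Fin m =>
          ∑ i ∈ Finset.range (d + 2), Y j' i * l ^ i))
        (fun j' => ∑ k ∈ Finset.range (d + 1), ((k : ℝ) + 1) * Y j' (k + 1) * l ^ k) l := by
      intro l
      rw [hasDerivAt_pi]
      intro j'
      have h1 : HasDerivAt (fun l : ℝ => ∑ i ∈ Finset.range (d + 2), Y j' i * l ^ i)
          (∑ i ∈ Finset.range (d + 2), Y j' i * ((i : ℝ) * l ^ (i - 1))) l :=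
        HasDerivAt.fun_sum fun i _ => (hasDerivAt_pow i l).const_mul (Y j' i)
      have hsum : (∑ i ∈ Finset.range (d + 2), Y j' i * ((i : ℝ) * l ^ (i - 1)))
          = ∑ k ∈ Finset.range (d + 1), ((k : ℝ) + 1) * Y j' (k + 1) * l ^ k := by
        rw [Finset.sum_range_succ']
        simp only [Nat.cast_zero, zero_mul, mul_zero, add_zero]
        apply Finset.sum_congr rfl
        intro k hk
        simp only [Nat.add_sub_cancel]
        push_cast
        ring
      exact hsum ▸ h1
    have hgderiv : deriv (fun l => f (fun j : Fin m =>
          ∑ i ∈ Finset.range (d + 1 + 1), Y j i * l ^ i))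
        = fun l => ∑ j : Fin m, ∑ k ∈ Finset.range (d + 1),
            ((k : ℝ) + 1) * Y j (k + 1) * (l ^ k *
              A j (fun j' => ∑ i ∈ Finset.range (d + 2), Y j' i * l ^ i)) := by
      funext l
      have hcomp := (((hf.differentiable (by simp)) _).hasFDerivAt).comp_hasDerivAt l (hp' l)
      have hcomp2 : HasDerivAt (fun l : ℝ => f (fun j : Fin m =>
            ∑ i ∈ Finset.range (d + 1 + 1), Y j i * l ^ i))
          ((fderiv ℝ f (fun j' => ∑ i ∈ Finset.range (d + 2), Y j' i * l ^ i))
            (fun j' => ∑ k ∈ Finset.range (d + 1), ((k : ℝ) + 1) * Y j' (k + 1) * l ^ k)) l :=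
        hcomp
      rw [hcomp2.deriv, hexp]
      apply Finset.sum_congr rfl
      intro j _
      rw [Finset.sum_mul]
      apply Finset.sum_congr rfl
      intro k _
      ring
    -- the key computation of the iterated derivative
    have hsmooth_jk : ∀ (j : Fin m) (k : ℕ), ContDiff ℝ (⊤ : ℕ∞) (fun l : ℝ => l ^ k *
        A j (fun j' => ∑ i ∈ Finset.range (d + 2), Y j' i * l ^ i)) := by
      intro j k
      exact (contDiff_id.pow k).mul ((hA j).comp (contDiff_pi.mpr fun j' =>
        ContDiff.sum fun i _ => contDiff_const.mul (contDiff_id.pow i)))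
    have key : iteratedDeriv (d + 1) (fun l => f (fun j : Fin m =>
          ∑ i ∈ Finset.range (d + 1 + 1), Y j i * l ^ i)) 0
        = ∑ j : Fin m, ∑ k ∈ Finset.range (d + 1), ((k : ℝ) + 1) * Y j (k + 1) *
            iteratedDeriv d (fun l : ℝ => l ^ k *
              A j (fun j' => ∑ i ∈ Finset.range (d + 1), Y j' i * l ^ i)) 0 := by
      rw [iteratedDeriv_succ', hgderiv]
      rw [aux_iteratedDeriv_sum _ _ (fun j _ => ContDiff.sum fun k _ =>
        contDiff_const.mul (hsmooth_jk j k)) d 0]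
      apply Finset.sum_congr rfl
      intro j _
      rw [aux_iteratedDeriv_sum _ _ (fun k _ => contDiff_const.mul (hsmooth_jk j k)) d 0]
      apply Finset.sum_congr rfl
      intro k _
      rw [aux_iteratedDeriv_const_mul (((k : ℝ) + 1) * Y j (k + 1)) _ (hsmooth_jk j k) d 0]
      congr 1
      have hjet := aux_jet (A j) (hA j)
        (fun l : ℝ => fun j' : Fin m => ∑ i ∈ Finset.range (d + 1), Y j' i * l ^ i)
        (fun _ : ℝ => fun j' : Fin m => Y j' (d + 1)) hq contDiff_const
        k d (d + 1) (by omega)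
      have heq : (fun l : ℝ => l ^ k *
          A j (fun j' => ∑ i ∈ Finset.range (d + 2), Y j' i * l ^ i))
          = fun l : ℝ => l ^ k * A j ((fun j' => ∑ i ∈ Finset.range (d + 1), Y j' i * l ^ i) +
              l ^ (d + 1) • fun j' => Y j' (d + 1)) := by
        funext l
        congr 1
        congr 1
        funext j'
        simp [Finset.sum_range_succ]
        ring
      rw [heq, hjet]
    -- the per-term computation of the right-hand side
    have hterm : ∀ (j : Fin m) (k : ℕ), k ∈ Finset.range (d + 1) →
        deriv (fun s => diffTransformAutMulti m f (d + 1 - 1)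
            (Function.update Y j (Function.update (Y j) k s))) (Y j k)
          = (1 / (d.factorial : ℝ)) * iteratedDeriv d (fun l : ℝ => l ^ k *
              A j (fun j' => ∑ i ∈ Finset.range (d + 1), Y j' i * l ^ i)) 0 := by
      intro j k hk
      set c := Y j k with hc
      set H : ℝ → ℝ → ℝ := fun s l => f ((fun j' : Fin m =>
          ∑ i ∈ Finset.range (d + 1), Y j' i * l ^ i) +
          ((s - c) * l ^ k) • (Pi.single j 1 : Fin m → ℝ)) with hHdef
      have hH : ContDiff ℝ (⊤ : ℕ∞) (Function.uncurry H) := by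
        apply hf.comp
        exact (hq.comp contDiff_snd).add
          (((contDiff_fst.sub contDiff_const).mul (contDiff_snd.pow k)).smul contDiff_const)
      have hfun : (fun s => diffTransformAutMulti m f (d + 1 - 1)
            (Function.update Y j (Function.update (Y j) k s)))
          = fun s => (1 / (d.factorial : ℝ)) * iteratedDeriv d (H s) 0 := by
        funext s
        simp only [Nat.add_sub_cancel, diffTransformAutMulti]
        congr 1
        congr 1
        funext l
        congr 1
        funext j'
        by_cases hj : j' = j
        · subst hj
          simp only [Function.update_self, Pi.add_apply, Pi.smul_apply,
            Pi.single_eq_same, smul_eq_mul, mul_one]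
          have hsplit : ∀ i, Function.update (Y j') k s i
              = Y j' i + (if i = k then s - Y j' k else 0) := by
            intro i
            by_cases hik : i = k
            · subst hik; simp
            · simp [Function.update_of_ne hik, hik]
          calc ∑ i ∈ Finset.range (d + 1), Function.update (Y j') k s i * l ^ i
              = ∑ i ∈ Finset.range (d + 1),
                  (Y j' i * l ^ i + (if i = k then (s - Y j' k) * l ^ i else 0)) := by
                apply Finset.sum_congr rfl
                intro i _
                rw [hsplit i]
                by_cases hik : i = k <;> simp [hik] <;> ring
            _ = (∑ i ∈ Finset.range (d + 1), Y j' i * l ^ i) + (s - c) * l ^ k := by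
                rw [Finset.sum_add_distrib, Finset.sum_ite_eq' (Finset.range (d + 1)) k]
                simp [Finset.mem_range.mp hk, hc]
        · simp only [Function.update_of_ne hj, Pi.add_apply, Pi.smul_apply,
            Pi.single_eq_of_ne hj, smul_eq_mul, mul_zero, add_zero]
      rw [hfun]
      rw [deriv_const_mul]
      swap
      · have h1 := aux_contDiff_iteratedDeriv H hH d
        exact ((h1.comp (contDiff_id.prodMk contDiff_const)).differentiable (by simp)).differentiableAt
      congr 1
      rw [aux_swap H hH d c 0]
      congr 1
      funext y
      simp only [hHdef]
      have h0 : HasDerivAt (fun x : ℝ => (x - c) * y ^ k) (y ^ k) c := by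
        simpa using ((hasDerivAt_id c).sub_const c).mul_const (y ^ k)
      have hcurve : HasDerivAt (fun x : ℝ => (fun j' : Fin m =>
            ∑ i ∈ Finset.range (d + 1), Y j' i * y ^ i)
            + ((x - c) * y ^ k) • (Pi.single j 1 : Fin m → ℝ))
          ((y ^ k) • (Pi.single j 1 : Fin m → ℝ)) c :=
        (h0.smul_const _).const_add _
      have hB' := ((hf.differentiable (by simp)) ((fun j' : Fin m =>
          ∑ i ∈ Finset.range (d + 1), Y j' i * y ^ i)
          + ((c - c) * y ^ k) • (Pi.single j 1 : Fin m → ℝ))).hasFDerivAt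
      have hcomp := hB'.comp_hasDerivAt c hcurve
      have hpt : ((fun j' : Fin m => ∑ i ∈ Finset.range (d + 1), Y j' i * y ^ i)
          + ((c - c) * y ^ k) • (Pi.single j 1 : Fin m → ℝ))
          = fun j' : Fin m => ∑ i ∈ Finset.range (d + 1), Y j' i * y ^ i := by
        funext j'
        simp
      have hcomp2 : HasDerivAt (fun x : ℝ => f ((fun j' : Fin m =>
            ∑ i ∈ Finset.range (d + 1), Y j' i * y ^ i)
            + ((x - c) * y ^ k) • (Pi.single j 1 : Fin m → ℝ)))
          ((fderiv ℝ f ((fun j' : Fin m => ∑ i ∈ Finset.range (d + 1), Y j' i * y ^ i)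
            + ((c - c) * y ^ k) • (Pi.single j 1 : Fin m → ℝ)))
            ((y ^ k) • (Pi.single j 1 : Fin m → ℝ))) c := hcomp
      rw [hcomp2.deriv, hpt, map_smul, smul_eq_mul]
    -- put everything together
    have hrhs : (∑ j : Fin m, ∑ k ∈ Finset.range (d + 1), ((k : ℝ) + 1) * Y j (k + 1) *
          deriv (fun s => diffTransformAutMulti m f (d + 1 - 1)
            (Function.update Y j (Function.update (Y j) k s))) (Y j k))
        = ∑ j : Fin m, ∑ k ∈ Finset.range (d + 1), ((k : ℝ) + 1) * Y j (k + 1) *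
            ((1 / (d.factorial : ℝ)) * iteratedDeriv d (fun l : ℝ => l ^ k *
              A j (fun j' => ∑ i ∈ Finset.range (d + 1), Y j' i * l ^ i)) 0) := by
      apply Finset.sum_congr rfl
      intro j _
      apply Finset.sum_congr rfl
      intro k hk
      rw [hterm j k hk]
    rw [hrhs]
    have hR : (∑ j : Fin m, ∑ k ∈ Finset.range (d + 1), ((k : ℝ) + 1) * Y j (k + 1) *
          ((1 / (d.factorial : ℝ)) * iteratedDeriv d (fun l : ℝ => l ^ k *
            A j (fun j' => ∑ i ∈ Finset.range (d + 1), Y j' i * l ^ i)) 0))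
        = (1 / (d.factorial : ℝ)) * ∑ j : Fin m, ∑ k ∈ Finset.range (d + 1),
            ((k : ℝ) + 1) * Y j (k + 1) * iteratedDeriv d (fun l : ℝ => l ^ k *
              A j (fun j' => ∑ i ∈ Finset.range (d + 1), Y j' i * l ^ i)) 0 := by
      rw [Finset.mul_sum]
      apply Finset.sum_congr rfl
      intro j _
      rw [Finset.mul_sum]
      apply Finset.sum_congr rfl
      intro k _
      ring
    rw [hR]
    simp only [diffTransformAutMulti]
    rw [key]
    have hfac : (((d + 1 : ℕ)) : ℝ) * (1 / ((d + 1).factorial : ℝ)) = 1 / (d.factorial : ℝ) := by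
      rw [Nat.factorial_succ]
      have h1 : (d.factorial : ℝ) ≠ 0 := Nat.cast_ne_zero.mpr d.factorial_ne_zero
      have h2 : ((d : ℝ) + 1) ≠ 0 := by positivity
      push_cast
      field_simp
    rw [← mul_assoc, hfac]
  · intro Y
    simp [diffTransformAutMulti, iteratedDeriv_zero, Finset.sum_range_one]
end

section
/- Let y : ℝ → ℝ be infinitely differentiable in a neighborhood of 0 with y(0) = −1 and y′(0) = 2, and let Y(k) = y⁽ᵏ⁾(0)/k! denote its Taylor coefficients at 0. Let F(k) denote the k-th Taylor coefficient at t₀ = 0 of the function t ↦ arcsin(1 − t + y(t)), where arcsin is the real inverse sine function (the principal branch). Then F(0) = 0, F(1) = 1, F(2) = Y(2), and F(3) = Y(3) + 1/6. -/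
open Real Filter Topology

/-- auxiliary: a C⁴-at-0 function is differentiable, with differentiable first and
second derivatives, on an open neighborhood of 0. -/
lemma aux_c4 (f : ℝ → ℝ) (hf : ContDiffAt ℝ 4 f 0) :
    ∃ s : Set ℝ, IsOpen s ∧ (0:ℝ) ∈ s ∧
      (∀ t ∈ s, DifferentiableAt ℝ f t) ∧
      (∀ t ∈ s, DifferentiableAt ℝ (deriv f) t) ∧
      (∀ t ∈ s, DifferentiableAt ℝ (deriv (deriv f)) t) := by
  obtain ⟨u, hu, hcd⟩ := hf.contDiffOn (le_refl _) (by simp)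
  obtain ⟨s, hsu, hs, h0⟩ := mem_nhds_iff.mp hu
  have hcd' : ContDiffOn ℝ 4 f s := hcd.mono hsu
  have d1 : ContDiffOn ℝ 3 (deriv f) s :=
    hcd'.deriv_of_isOpen hs (by norm_num)
  have d2 : ContDiffOn ℝ 2 (deriv (deriv f)) s :=
    d1.deriv_of_isOpen hs (by norm_num)
  refine ⟨s, hs, h0, ?_, ?_, ?_⟩
  · exact fun t ht => (hcd'.contDiffAt (hs.mem_nhds ht)).differentiableAt (by norm_num)
  · exact fun t ht => (d1.contDiffAt (hs.mem_nhds ht)).differentiableAt (by norm_num)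
  · exact fun t ht => (d2.contDiffAt (hs.mem_nhds ht)).differentiableAt (by norm_num)

/-- Example 4 of the paper: the first differential transforms at `t₀ = 0`
of the nonlinear non-autonomous term `arcsin(1 − t + y(t))`, where
`y(0) = −1` and `y′(0) = 2`. -/
theorem example4_transforms
    (y : ℝ → ℝ) (hy : ContDiffAt ℝ (⊤ : ℕ∞) y 0) (hy0 : y 0 = -1) (hy1 : deriv y 0 = 2)
    (Y F : ℕ → ℝ)
    (hY : ∀ k, Y k = iteratedDeriv k y 0 / (k.factorial : ℝ))
    (hF : ∀ k, F k = (1 / (k.factorial : ℝ)) *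
      iteratedDeriv k (fun t => Real.arcsin (1 - t + y t)) 0) :
    F 0 = 0 ∧ F 1 = 1 ∧ F 2 = Y 2 ∧ F 3 = Y 3 + 1 / 6 := by
  set u : ℝ → ℝ := fun t => 1 - t + y t with hu_def
  set g : ℝ → ℝ := fun t => Real.arcsin (u t) with hg_def
  have hu0 : u 0 = 0 := by simp [hu_def, hy0]
  have hucd : ContDiffAt ℝ 4 u 0 :=
    ((contDiffAt_const (c := (1:ℝ))).sub contDiffAt_id).add (hy.of_le (WithTop.coe_le_coe.mpr le_top))
  have hgcd : ContDiffAt ℝ 4 g 0 := by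
    have ha : ContDiffAt ℝ 4 Real.arcsin (u 0) := by
      rw [hu0]; exact Real.contDiffAt_arcsin (by norm_num) (by norm_num)
    exact ha.comp 0 hucd
  obtain ⟨s, hs, h0s, hgd, hg1d, hg2d⟩ := aux_c4 g hgcd
  obtain ⟨s', hs', h0s', hyd, hy1d, hy2d⟩ := aux_c4 y (hy.of_le (WithTop.coe_le_coe.mpr le_top))
  have hsev : ∀ᶠ t in 𝓝 (0:ℝ), t ∈ s := hs.mem_nhds h0s
  have hs'ev : ∀ᶠ t in 𝓝 (0:ℝ), t ∈ s' := hs'.mem_nhds h0s'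
  -- the argument stays in (-1, 1) near 0
  have hmem : ∀ᶠ t in 𝓝 (0:ℝ), u t ∈ Set.Ioo (-1:ℝ) 1 := by
    have hc : ContinuousAt u 0 := hucd.continuousAt
    have hI : Set.Ioo (-1:ℝ) 1 ∈ 𝓝 (u 0) := by
      rw [hu0]; exact Ioo_mem_nhds (by norm_num) (by norm_num)
    exact hc.eventually_mem hI
  -- P1 : sin ∘ g = u near 0
  have P1 : (fun t => Real.sin (g t)) =ᶠ[𝓝 (0:ℝ)] u := by
    filter_upwards [hmem] with t ht
    exact Real.sin_arcsin ht.1.le ht.2.le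
  have D1 : deriv (fun t => Real.sin (g t)) =ᶠ[𝓝 (0:ℝ)] deriv u := P1.deriv
  have Q1 : (fun t => Real.cos (g t) * deriv g t)
      =ᶠ[𝓝 (0:ℝ)] (fun t => -1 + deriv y t) := by
    filter_upwards [D1, hsev, hs'ev] with t h1 ht ht'
    have hL : deriv (fun x => Real.sin (g x)) t = Real.cos (g t) * deriv g t :=
      ((hgd t ht).hasDerivAt.sin).deriv
    have hR : deriv u t = -1 + deriv y t := by
      have : HasDerivAt u (-1 + deriv y t) t := by
        have h1' : HasDerivAt (fun x : ℝ => 1 - x) (-1) t := by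
          simpa using (hasDerivAt_id t).const_sub 1
        exact h1'.add (hyd t ht').hasDerivAt
      exact this.deriv
    rw [← hL, h1, hR]
  have hg0 : g 0 = 0 := by rw [hg_def]; simp [hu0]
  have hg10 : deriv g 0 = 1 := by
    have := Q1.self_of_nhds
    simp only [hg0, Real.cos_zero, one_mul, hy1] at this
    linarith
  -- second differentiation
  have D2 := Q1.deriv
  have Q2 : (fun t => -Real.sin (g t) * deriv g t * deriv g t
        + Real.cos (g t) * deriv (deriv g) t)
      =ᶠ[𝓝 (0:ℝ)] (fun t => deriv (deriv y) t) := by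
    filter_upwards [D2, hsev] with t h2 ht
    have hL : deriv (fun x => Real.cos (g x) * deriv g x) t
        = -Real.sin (g t) * deriv g t * deriv g t
          + Real.cos (g t) * deriv (deriv g) t :=
      (((hgd t ht).hasDerivAt.cos).mul (hg1d t ht).hasDerivAt).deriv
    have hR : deriv (fun x => -1 + deriv y x) t = deriv (deriv y) t :=
      deriv_const_add _
    rw [← hL, h2, hR]
  have hg20 : deriv (deriv g) 0 = deriv (deriv y) 0 := by
    have := Q2.self_of_nhds
    simpa [hg0] using this
  -- third differentiation: only the value at 0 is needed
  have D3 := Q2.deriv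
  have hg30 : deriv (deriv (deriv g)) 0 = deriv (deriv (deriv y)) 0 + 1 := by
    have h30 := D3.self_of_nhds
    -- compute the derivative of the LHS at 0 via HasDerivAt
    have hA : HasDerivAt (fun x => -Real.sin (g x) * deriv g x * deriv g x
          + Real.cos (g x) * deriv (deriv g) x)
        ((-(Real.cos (g 0) * deriv g 0) * deriv g 0 + -Real.sin (g 0) * deriv (deriv g) 0)
            * deriv g 0 + (-Real.sin (g 0) * deriv g 0) * deriv (deriv g) 0
          + ((-Real.sin (g 0) * deriv g 0) * deriv (deriv g) 0
            + Real.cos (g 0) * deriv (deriv (deriv g)) 0)) 0 := by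
      have hgd0 := (hgd 0 h0s).hasDerivAt
      have hg1d0 := (hg1d 0 h0s).hasDerivAt
      have hg2d0 := (hg2d 0 h0s).hasDerivAt
      exact ((hgd0.sin.neg.mul hg1d0).mul hg1d0).add (hgd0.cos.mul hg2d0)
    have hLval := hA.deriv
    rw [hLval] at h30
    simp only [hg0, hg10, Real.sin_zero, Real.cos_zero] at h30
    ring_nf at h30 ⊢
    linarith
  -- now assemble
  have hfun : (fun t => Real.arcsin (1 - t + y t)) = g := rfl
  have hit0 : iteratedDeriv 0 g 0 = 0 := by rw [iteratedDeriv_zero]; exact hg0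
  have hit1 : iteratedDeriv 1 g 0 = 1 := by rw [iteratedDeriv_one]; exact hg10
  have e2 : ∀ f : ℝ → ℝ, iteratedDeriv 2 f = deriv (deriv f) := by
    intro f
    rw [show (2:ℕ) = 1 + 1 from rfl, iteratedDeriv_succ, iteratedDeriv_one]
  have e3 : ∀ f : ℝ → ℝ, iteratedDeriv 3 f = deriv (deriv (deriv f)) := by
    intro f
    rw [show (3:ℕ) = 2 + 1 from rfl, iteratedDeriv_succ, e2]
  refine ⟨?_, ?_, ?_, ?_⟩
  · rw [hF 0, hit0]; simp
  · rw [hF 1, hit1]; simp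
  · rw [hF 2, hY 2, e2, hg20, e2]
    norm_num; ring
  · rw [hF 3, hY 3, e3, hg30, e3]
    norm_num [Nat.factorial]
    ring
end
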